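/- arXiv:2211.08124 — 11 statements merged into one kernel-verified Lean document; each statement's English description precedes it below -/
import Mathlib

section
/- Let q be a power of a prime p and let n be a positive integer. If two vectors v, w ∈ 𝔽_q^n satisfy s_m^{(n)}(v) = s_m^{(n)}(w) for every m ∈ [n]_q, then v and w lie in the same S_n-orbit, i.e., there exists a permutation π of {1,…,n} with w_i = v_{π(i)} for all i. In other words, the elementary symmetric polynomials {s_m^{(n)} : m ∈ [n]_q} separate S_n-orbits in 𝔽_q^n. -/
open Polynomial Finset

namespace Sep

variable {F : Type*} [Field F]

/-- The generating polynomial of a multiset. -/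
noncomputable def Eps (s : Multiset F) : Polynomial F :=
  (s.map (fun x => 1 + Polynomial.C x * Polynomial.X)).prod

@[simp] lemma Eps_zero : Eps (0 : Multiset F) = 1 := by simp [Eps]

@[simp] lemma Eps_cons (a : F) (s : Multiset F) :
    Eps (a ::ₘ s) = (1 + C a * X) * Eps s := by simp [Eps]

lemma Eps_add (s t : Multiset F) : Eps (s + t) = Eps s * Eps t := by
  simp [Eps]

lemma Eps_nsmul_singleton (n : ℕ) (a : F) :
    Eps (n • ({a} : Multiset F)) = (1 + C a * X) ^ n := by
  induction n with
  | zero => simp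
  | succ k ih => rw [succ_nsmul, Eps_add, ih, pow_succ]; simp [Eps]

lemma esymm_cons (a : F) (s : Multiset F) (m : ℕ) :
    (a ::ₘ s).esymm (m + 1) = s.esymm (m + 1) + a * s.esymm m := by
  rw [Multiset.esymm, Multiset.powersetCard_cons, Multiset.map_add, Multiset.sum_add,
    ← Multiset.esymm, Multiset.map_map]
  congr 1
  rw [Multiset.esymm, ← Multiset.sum_map_mul_left]
  apply congrArg Multiset.sum
  apply Multiset.map_congr rfl
  intro t _
  simp

@[simp] lemma esymm_zero' (s : Multiset F) : s.esymm 0 = 1 := by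
  simp [Multiset.esymm]

lemma coeff_Eps (s : Multiset F) (m : ℕ) : (Eps s).coeff m = s.esymm m := by
  induction s using Multiset.induction generalizing m with
  | empty =>
    cases m with
    | zero => simp
    | succ k => simp [Multiset.esymm, coeff_one, Multiset.powersetCard_zero_right]
  | cons a s ih =>
    cases m with
    | zero => simp [ih]
    | succ k =>
      rw [Eps_cons, add_mul, one_mul, coeff_add, ih, mul_assoc, coeff_C_mul, coeff_X_mul, ih,
        esymm_cons]


lemma exists_vec (s : Multiset F) :
    ∃ (n : ℕ) (v : Fin n → F), (Finset.univ.val.map v) = s := by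
  refine ⟨s.toList.length, s.toList.get, ?_⟩
  have h1 : (Finset.univ.val : Multiset (Fin s.toList.length))
      = ↑(List.finRange s.toList.length) := rfl
  rw [h1, Multiset.map_coe, ← List.ofFn_eq_map, List.ofFn_get, Multiset.coe_toList]

/-- power sums of a multiset -/
def pp (s : Multiset F) (i : ℕ) : F := (s.map (· ^ i)).sum

lemma esymm_aeval {n : ℕ} (v : Fin n → F) (i : ℕ) :
    MvPolynomial.aeval v (MvPolynomial.esymm (Fin n) F i) = (Finset.univ.val.map v).esymm i :=
  MvPolynomial.aeval_esymm_eq_multiset_esymm (Fin n) F i v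

lemma pp_aeval {n : ℕ} (v : Fin n → F) (i : ℕ) :
    MvPolynomial.aeval v (MvPolynomial.psum (Fin n) F i) = pp (Finset.univ.val.map v) i := by
  rw [MvPolynomial.psum, map_sum, pp, Multiset.map_map]
  simp [Finset.sum]

lemma pp_newton (s : Multiset F) (i : ℕ) (hi : 0 < i) :
    pp s i = (-1) ^ (i + 1) * i * s.esymm i -
      ∑ a ∈ (antidiagonal i).filter (fun a => a.1 ∈ Set.Ioo 0 i),
        (-1) ^ a.1 * s.esymm a.1 * pp s a.2 := by
  obtain ⟨n, v, rfl⟩ := exists_vec s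
  have h := congrArg (MvPolynomial.aeval v)
    (MvPolynomial.psum_eq_mul_esymm_sub_sum (Fin n) F i hi)
  simpa [map_sub, map_mul, map_pow, map_sum, map_natCast, esymm_aeval, pp_aeval] using h

lemma pp_det (I : ℕ) (s t : Multiset F)
    (h : ∀ i, i ≤ I → s.esymm i = t.esymm i) :
    ∀ i, 0 < i → i ≤ I → pp s i = pp t i := by
  intro i
  induction i using Nat.strong_induction_on with
  | _ i ih =>
    intro hi hiI
    rw [pp_newton s i hi, pp_newton t i hi, h i hiI]
    congr 1
    apply Finset.sum_congr rfl
    intro a ha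
    simp only [Finset.mem_filter, Finset.HasAntidiagonal.mem_antidiagonal, Set.mem_Ioo] at ha
    obtain ⟨hsum, h0, hlt⟩ := ha
    have ha2 : a.2 = i - a.1 := by omega
    rw [h a.1 (by omega), ih a.2 (by omega) (by omega) (by omega)]


section Fin
variable [Fintype F] [DecidableEq F]

lemma pp_count (s : Multiset F) (i : ℕ) :
    pp s i = ∑ c ∈ Finset.univ, (s.count c : F) * c ^ i := by
  rw [pp, Finset.sum_multiset_map_count]
  rw [← Finset.sum_subset (Finset.subset_univ s.toFinset)]
  · apply Finset.sum_congr rfl; intro c _; rw [nsmul_eq_mul]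
  · intro c _ hc
    rw [Multiset.count_eq_zero_of_notMem (by simpa using hc)]
    simp

lemma geom_aux {u : F} (hu1 : u ≠ 1) :
    ∑ i ∈ Finset.Icc 1 (Fintype.card F - 1), u ^ i = 0 := by
  have hq : 1 ≤ Fintype.card F := Fintype.card_pos
  have h1 : Finset.Icc 1 (Fintype.card F - 1) = Finset.Ico 1 (Fintype.card F) := by
    ext i; simp; omega
  rw [h1, Finset.sum_Ico_eq_sub _ hq, geom_sum_eq hu1, FiniteField.pow_card]
  rw [div_self (sub_ne_zero.mpr hu1)]
  simp

lemma vandermonde (d : F → F)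
    (h : ∀ i, 1 ≤ i → i ≤ Fintype.card F - 1 → ∑ c ∈ Finset.univ, d c * c ^ i = 0) :
    ∀ b : F, b ≠ 0 → d b = 0 := by
  intro b hb
  have key : ∑ i ∈ Finset.Icc 1 (Fintype.card F - 1), b⁻¹ ^ i *
      (∑ c ∈ Finset.univ, d c * c ^ i) = 0 := by
    apply Finset.sum_eq_zero
    intro i hi
    simp only [Finset.mem_Icc] at hi
    rw [h i hi.1 hi.2, mul_zero]
  have key2 : ∑ c ∈ Finset.univ, d c * (∑ i ∈ Finset.Icc 1 (Fintype.card F - 1), (c * b⁻¹) ^ i)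
      = 0 := by
    rw [← key]
    simp_rw [Finset.mul_sum]
    rw [Finset.sum_comm]
    apply Finset.sum_congr rfl
    intro i _
    apply Finset.sum_congr rfl
    intro c _
    rw [mul_pow]
    ring
  have key3 : ∑ c ∈ Finset.univ, d c * (∑ i ∈ Finset.Icc 1 (Fintype.card F - 1), (c * b⁻¹) ^ i)
      = -(d b) := by
    rw [Finset.sum_eq_single b]
    · have hb1 : b * b⁻¹ = 1 := mul_inv_cancel₀ hb
      rw [hb1]
      simp only [one_pow, Finset.sum_const, Nat.card_Icc, nsmul_eq_mul, mul_one]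
      have hq1 : 1 ≤ Fintype.card F := Fintype.card_pos
      have hn : Fintype.card F - 1 + 1 - 1 = Fintype.card F - 1 := by omega
      rw [hn]
      have hcast : ((Fintype.card F - 1 : ℕ) : F) = -1 := by
        have he : (Fintype.card F - 1 : ℕ) + 1 = Fintype.card F := by omega
        have h2 := congrArg (fun k : ℕ => (k : F)) he
        push_cast at h2
        rw [FiniteField.cast_card_eq_zero] at h2
        linear_combination h2
      rw [hcast]
      ring
    · intro c _ hc
      rcases eq_or_ne c 0 with rfl | hc0
      · rw [geom_aux ?_]
        · ring
        · simp only [zero_mul]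
          intro h01
          exact one_ne_zero h01.symm
      · rw [geom_aux ?_]
        · ring
        · intro h1
          apply hc
          field_simp at h1
          exact h1
    · intro hbu
      exact absurd (Finset.mem_univ b) hbu
  rw [key2] at key3
  linear_combination key3


lemma count_mod_p (p : ℕ) [CharP F p] (s t : Multiset F)
    (h : ∀ i, i ≤ Fintype.card F - 1 → s.esymm i = t.esymm i) :
    ∀ c : F, c ≠ 0 → s.count c % p = t.count c % p := by
  intro c hc
  have hpp := pp_det (Fintype.card F - 1) s t h
  have hv : ∀ i, 1 ≤ i → i ≤ Fintype.card F - 1 →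
      ∑ b ∈ Finset.univ, ((s.count b : F) - (t.count b : F)) * b ^ i = 0 := by
    intro i h1 h2
    have h3 := hpp i h1 h2
    rw [pp_count, pp_count] at h3
    simp only [sub_mul]
    rw [Finset.sum_sub_distrib, h3, sub_self]
  have h4 := vandermonde _ hv c hc
  have h5 : (s.count c : F) = (t.count c : F) := by
    have := sub_eq_zero.mp h4
    exact this
  exact (CharP.natCast_eq_natCast F p).mp h5

variable (p : ℕ)

noncomputable def Rpart (s : Multiset F) : F[X] :=
  ∏ c ∈ Finset.univ, (1 + C c * X) ^ (s.count c % p)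

noncomputable def shrink (s : Multiset F) : Multiset F :=
  ∑ c ∈ Finset.univ, (s.count c / p) • ({c ^ p} : Multiset F)

lemma Eps_count_prod (s : Multiset F) :
    Eps s = ∏ c ∈ Finset.univ, (1 + C c * X) ^ s.count c := by
  rw [Eps, Finset.prod_multiset_map_count]
  rw [← Finset.prod_subset (Finset.subset_univ s.toFinset)]
  intro c _ hc
  rw [Multiset.count_eq_zero_of_notMem (by simpa using hc), pow_zero]

lemma Eps_sum {ι : Type*} (A : Finset ι) (f : ι → Multiset F) :
    Eps (∑ i ∈ A, f i) = ∏ i ∈ A, Eps (f i) := by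
  classical
  induction A using Finset.cons_induction with
  | empty => simp
  | cons a A ha ih =>
    rw [Finset.sum_cons, Finset.prod_cons, Eps_add, ih]

lemma Eps_shrink (s : Multiset F) :
    Eps (shrink p s) = ∏ c ∈ Finset.univ, (1 + C (c ^ p) * X) ^ (s.count c / p) := by
  rw [shrink, Eps_sum]
  apply Finset.prod_congr rfl
  intro c _
  rw [Eps_nsmul_singleton]

lemma Rpart_coeff_zero (s : Multiset F) : (Rpart p s).coeff 0 = 1 := by
  rw [coeff_zero_eq_eval_zero, Rpart]
  simp [eval_prod]

lemma factor [CharP F p] (hp : p.Prime) (s : Multiset F) :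
    Eps s = Rpart p s * Polynomial.expand F p (Eps (shrink p s)) := by
  haveI : Fact p.Prime := ⟨hp⟩
  rw [Eps_count_prod, Rpart, Eps_shrink, map_prod, ← Finset.prod_mul_distrib]
  apply Finset.prod_congr rfl
  intro c _
  rw [map_pow]
  have hexp : Polynomial.expand F p (1 + C (c ^ p) * X) = (1 + C c * X) ^ p := by
    rw [map_add, map_one, map_mul, Polynomial.expand_C, Polynomial.expand_X]
    rw [add_pow_char, one_pow, mul_pow, ← C_pow]
  rw [hexp, ← pow_mul, ← pow_add]
  congr 1
  exact (Nat.mod_add_div _ _).symm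

lemma Rpart_congr (s t : Multiset F)
    (h : ∀ c : F, c ≠ 0 → s.count c % p = t.count c % p) : Rpart p s = Rpart p t := by
  rw [Rpart, Rpart]
  apply Finset.prod_congr rfl
  intro c _
  rcases eq_or_ne c 0 with rfl | hc
  · simp
  · rw [h c hc]

end Fin

lemma cancel (R A B : F[X]) (h0 : R.coeff 0 = 1) (m : ℕ)
    (h : ∀ i < m, (R * A).coeff i = (R * B).coeff i) :
    ∀ i < m, A.coeff i = B.coeff i := by
  intro i
  induction i using Nat.strong_induction_on with
  | _ i ih =>
    intro him
    have h1 : (0 : F) = ∑ x ∈ antidiagonal i, R.coeff x.1 * (A.coeff x.2 - B.coeff x.2) := by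
      have := h i him
      rw [coeff_mul, coeff_mul] at this
      rw [show (0:F) = (∑ x ∈ antidiagonal i, R.coeff x.1 * A.coeff x.2)
        - ∑ x ∈ antidiagonal i, R.coeff x.1 * B.coeff x.2 from by rw [this, sub_self]]
      rw [← Finset.sum_sub_distrib]
      apply Finset.sum_congr rfl
      intros
      ring
    have h2 : ∑ x ∈ antidiagonal i, R.coeff x.1 * (A.coeff x.2 - B.coeff x.2)
        = R.coeff 0 * (A.coeff i - B.coeff i) := by
      apply Finset.sum_eq_single_of_mem (0, i)
      · simp
      · intro x hx hne
        have hxi : x.1 + x.2 = i := Finset.HasAntidiagonal.mem_antidiagonal.mp hx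
        have hx2 : x.2 < i := by
          rcases Nat.lt_or_ge x.2 i with h' | h'
          · exact h'
          · exfalso; apply hne
            have : x.2 = i := le_antisymm (by omega) h'
            have : x.1 = 0 := by omega
            exact Prod.ext this ‹x.2 = i›
        rw [ih x.2 hx2 (by omega), sub_self, mul_zero]
    rw [h2, h0, one_mul] at h1
    have := sub_eq_zero.mp h1.symm
    exact this


/-- membership in `[n]_q` without the bound `m ≤ n`. -/
def Special (p q m : ℕ) : Prop := ∃ j k : ℕ, 1 ≤ j ∧ j ≤ q - 1 ∧ m = j * p ^ k

section Key
variable [Fintype F] [DecidableEq F]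

lemma key (p : ℕ) [CharP F p] (hp : p.Prime) :
    ∀ m : ℕ, ∀ s t : Multiset F, (∀ i, i < m → s.esymm i = t.esymm i) →
      ¬ Special p (Fintype.card F) m → s.esymm m = t.esymm m := by
  intro m
  induction m using Nat.strong_induction_on with
  | _ m IH =>
    intro s t hlow hns
    rcases Nat.eq_zero_or_pos m with rfl | hm
    · simp
    have hmq : Fintype.card F - 1 < m := by
      by_contra hle
      push_neg at hle
      exact hns ⟨m, 0, hm, hle, by simp⟩
    have hdig : ∀ c : F, c ≠ 0 → s.count c % p = t.count c % p :=
      count_mod_p p s t (fun i hi => hlow i (by omega))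
    have hR : Rpart p s = Rpart p t := Rpart_congr p s t hdig
    have hfs := factor p hp s
    have hft := factor p hp t
    have hclow : ∀ i < m, (Eps s).coeff i = (Eps t).coeff i := by
      intro i hi; rw [coeff_Eps, coeff_Eps]; exact hlow i hi
    have hcan : ∀ i < m, (Polynomial.expand F p (Eps (shrink p s))).coeff i
        = (Polynomial.expand F p (Eps (shrink p t))).coeff i := by
      apply cancel (Rpart p s) _ _ (Rpart_coeff_zero p s) m
      intro i hi
      rw [← hfs]
      conv_rhs => rw [hR, ← hft]
      exact hclow i hi
    rw [← coeff_Eps, ← coeff_Eps, hfs, hft, hR]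
    rw [coeff_mul, coeff_mul]
    apply Finset.sum_congr rfl
    intro x hx
    have hxi : x.1 + x.2 = m := Finset.HasAntidiagonal.mem_antidiagonal.mp hx
    rcases Nat.lt_or_ge x.2 m with h2 | h2
    · rw [hcan x.2 h2]
    · have hx2 : x.2 = m := by omega
      congr 1
      rw [hx2]
      rw [Polynomial.coeff_expand hp.pos, Polynomial.coeff_expand hp.pos]
      by_cases hdvd : p ∣ m
      · rw [if_pos hdvd, if_pos hdvd]
        obtain ⟨m', hm'⟩ := hdvd
        have hdm : m / p = m' := by rw [hm', Nat.mul_div_cancel_left _ hp.pos]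
        rw [hdm, coeff_Eps, coeff_Eps]
        apply IH m' (by
          have := hp.one_lt
          calc m' < p * m' := by
                have hm'pos : 0 < m' := by
                  rcases Nat.eq_zero_or_pos m' with rfl | h'
                  · omega
                  · exact h'
                calc m' = 1 * m' := (one_mul m').symm
                _ < p * m' := by exact (Nat.mul_lt_mul_right hm'pos).mpr this
          _ = m := hm'.symm)
        · intro i hi
          rw [← coeff_Eps, ← coeff_Eps]
          have hpi : p * i < m := by
            calc p * i < p * m' := (Nat.mul_lt_mul_left hp.pos).mpr hi
            _ = m := hm'.symm
          have hc := hcan (p * i) hpi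
          rw [Polynomial.coeff_expand hp.pos, Polynomial.coeff_expand hp.pos] at hc
          rw [if_pos (Dvd.intro i rfl), if_pos (Dvd.intro i rfl),
            Nat.mul_div_cancel_left _ hp.pos] at hc
          exact hc
        · intro hsp
          apply hns
          obtain ⟨j, k, hj1, hj2, hjk⟩ := hsp
          refine ⟨j, k + 1, hj1, hj2, ?_⟩
          rw [hm', hjk, pow_succ]
          ring
      · rw [if_neg hdvd, if_neg hdvd]

end Key

lemma Eps_ne_zero (s : Multiset F) : Eps s ≠ 0 := by
  intro h
  have h0 : (Eps s).coeff 0 = 1 := by rw [coeff_Eps]; simp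
  rw [h] at h0
  simp at h0

lemma roots_linear {a : F} (ha : a ≠ 0) : (1 + C a * X).roots = {-a⁻¹} := by
  have hfac : 1 + C a * X = C a * (X - C (-a⁻¹)) := by
    rw [mul_sub, ← C_mul, mul_neg, mul_inv_cancel₀ ha]
    ring_nf
    rw [map_neg, map_one]
    ring
  rw [hfac, roots_C_mul _ ha, roots_X_sub_C]

lemma roots_Eps [DecidableEq F] (s : Multiset F) :
    (Eps s).roots = (s.filter (fun x => x ≠ 0)).map (fun x => -x⁻¹) := by
  induction s using Multiset.induction with
  | empty => simp
  | cons a s ih =>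
    have hmul : (1 + C a * X) * Eps s ≠ 0 := by
      rw [← Eps_cons]; exact Eps_ne_zero _
    rw [Eps_cons, roots_mul hmul, ih]
    rcases eq_or_ne a 0 with rfl | ha
    · rw [Multiset.filter_cons_of_neg _ (by simp)]
      simp
    · rw [Multiset.filter_cons_of_pos _ (by simpa using ha), roots_linear ha,
        Multiset.map_cons]
      rfl

lemma Eps_inj [DecidableEq F] (s t : Multiset F) (hcard : Multiset.card s = Multiset.card t)
    (h : Eps s = Eps t) : s = t := by
  have hf : s.filter (fun x => x ≠ 0) = t.filter (fun x => x ≠ 0) := by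
    apply Multiset.map_injective (f := fun x : F => -x⁻¹)
    · intro x y hxy
      exact inv_injective (neg_injective hxy)
    · rw [← roots_Eps, ← roots_Eps, h]
  ext c
  rcases eq_or_ne c 0 with rfl | hc
  · have key : ∀ u : Multiset F, Multiset.card u
        = Multiset.card (u.filter (fun x => x ≠ 0)) + u.count 0 := by
      intro u
      have h1 := congrArg Multiset.card (Multiset.filter_add_not (fun x => x ≠ 0) u)
      rw [Multiset.card_add] at h1
      rw [← h1]
      congr 1
      rw [Multiset.count_eq_card_filter_eq]
      congr 1
      apply Multiset.filter_congr
      intro x _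
      simp [not_not, eq_comm]
    have h1 := key s
    have h2 := key t
    rw [hf, hcard] at h1
    omega
  · have h1 := congrArg (Multiset.count c) hf
    rw [Multiset.count_filter, Multiset.count_filter, if_pos hc, if_pos hc] at h1
    exact h1

lemma esymm_eq_zero_of_lt {s : Multiset F} {m : ℕ} (h : Multiset.card s < m) :
    s.esymm m = 0 := by
  rw [Multiset.esymm, Multiset.powersetCard_eq_empty _ h]
  simp

lemma orbit_of_multiset_eq {n : ℕ} (v w : Fin n → F)
    (h : (Finset.univ.val.map v) = Finset.univ.val.map w) :
    ∃ π : Equiv.Perm (Fin n), ∀ i, w i = v (π i) := by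
  classical
  have hcard : ∀ c : F, Fintype.card {i // w i = c} = Fintype.card {i // v i = c} := by
    intro c
    have hc := congrArg (Multiset.count c) h
    rw [Multiset.count_map, Multiset.count_map] at hc
    rw [Fintype.card_subtype, Fintype.card_subtype]
    have e1 : ∀ u : Fin n → F, (Finset.filter (fun i => u i = c) Finset.univ).card
        = Multiset.card (Multiset.filter (fun i => c = u i) Finset.univ.val) := by
      intro u
      rw [Finset.card_def, Finset.filter_val]
      congr 1
      apply Multiset.filter_congr
      intro x _
      exact eq_comm
    rw [e1 v, e1 w, hc]
  refine ⟨Equiv.ofFiberEquiv (f := w) (g := v)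
    (fun c => Fintype.equivOfCardEq (hcard c)), fun i => ?_⟩
  exact (Equiv.ofFiberEquiv_map _ i).symm

end Sep


/-- The value of the `k`-th elementary symmetric polynomial in `n` variables on a
vector `v ∈ F^n` (it is `0` for `k > n` and `1` for `k = 0`). -/
def esymmVal {F : Type*} [CommSemiring F] (n k : ℕ) (v : Fin n → F) : F :=
  ∑ t ∈ Finset.powersetCard k (Finset.univ : Finset (Fin n)), ∏ i ∈ t, v i

/-- Two vectors `v, w ∈ F^n` lie in the same `S_n`-orbit. -/
def SameOrbit {F : Type*} (n : ℕ) (v w : Fin n → F) : Prop :=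
  ∃ π : Equiv.Perm (Fin n), ∀ i, w i = v (π i)

/-- If two vectors in `𝔽_q^n` agree on all elementary symmetric polynomials `s_m^{(n)}`
with `m ∈ [n]_q = {j·p^k ≤ n : 1 ≤ j ≤ q-1, k ≥ 0}`, then they are in the same
`S_n`-orbit. -/
theorem stmt0 (p : ℕ) (hp : p.Prime) (F : Type*) [Field F] [Fintype F] [CharP F p]
    (n : ℕ) (hn : 0 < n) (v w : Fin n → F)
    (h : ∀ m : ℕ,
      (∃ j k : ℕ, 1 ≤ j ∧ j ≤ Fintype.card F - 1 ∧ m = j * p ^ k ∧ m ≤ n) →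
      esymmVal n m v = esymmVal n m w) :
    SameOrbit n v w := by
  classical
  have hval : ∀ (u : Fin n → F) (m : ℕ),
      esymmVal n m u = (Finset.univ.val.map u).esymm m := fun u m =>
    (Finset.esymm_map_val u Finset.univ m).symm
  set sv : Multiset F := Finset.univ.val.map v with hsv
  set sw : Multiset F := Finset.univ.val.map w with hsw
  have hcv : Multiset.card sv = n := by simp [hsv]
  have hcw : Multiset.card sw = n := by simp [hsw]
  have hall : ∀ m, sv.esymm m = sw.esymm m := by
    intro m
    induction m using Nat.strong_induction_on with
    | _ m IH =>
      by_cases hsp : Sep.Special p (Fintype.card F) m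
      · obtain ⟨j, k, hj1, hjq, hm⟩ := hsp
        by_cases hmn : m ≤ n
        · have hh := h m ⟨j, k, hj1, hjq, hm, hmn⟩
          rw [hval v m, hval w m] at hh
          exact hh
        · rw [Sep.esymm_eq_zero_of_lt (by omega), Sep.esymm_eq_zero_of_lt (by omega)]
      · exact Sep.key p hp m sv sw (fun i hi => IH i hi) hsp
  have hEps : Sep.Eps sv = Sep.Eps sw := by
    apply Polynomial.ext
    intro m
    rw [Sep.coeff_Eps, Sep.coeff_Eps]
    exact hall m
  have hseq : sv = sw := Sep.Eps_inj sv sw (by rw [hcv, hcw]) hEps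
  exact Sep.orbit_of_multiset_eq v w hseq
end

section
/- Let q be a power of a prime p, let n be a positive integer, and let f, g ∈ 𝔽_q[x] be monic polynomials of degree n such that both f and g split as products of linear (root) factors over 𝔽_q (i.e., all their roots lie in 𝔽_q, counted with multiplicity). If for every j ∈ [n]_q the coefficient of x^{n−j} in f equals the coefficient of x^{n−j} in g, then f = g. -/
open Polynomial Finset Multiset

namespace Stmt1Aux

variable {F : Type*} [Field F] [Fintype F] [DecidableEq F]

/-- power sum of a multiset -/
def pS (s : Multiset F) (k : ℕ) : F := (s.map (· ^ k)).sum

lemma geom_sum_card (t : F) :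
    ∑ i ∈ Finset.range (Fintype.card F), t ^ i = if t = 1 then 0 else 1 := by
  split_ifs with h
  · subst h; simpa using Nat.cast_card_eq_zero F
  · have h1 : t - 1 ≠ 0 := sub_ne_zero.mpr h
    have hgeo := geom_sum_mul t (Fintype.card F)
    have ht : t ^ Fintype.card F = t := FiniteField.pow_card t
    rw [ht] at hgeo
    have : (∑ i ∈ Finset.range (Fintype.card F), t ^ i) * (t - 1) = 1 * (t - 1) := by
      rw [hgeo]; ring
    exact mul_right_cancel₀ h1 this

lemma moments_zero (c : F → F)
    (h : ∀ i, i < Fintype.card F → ∑ a : F, c a * a ^ i = 0) : ∀ a, c a = 0 := by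
  have hq : 0 < Fintype.card F := Fintype.card_pos
  have hsum : ∑ a : F, c a = 0 := by simpa using h 0 hq
  have key : ∀ b : F, b ≠ 0 → c b⁻¹ = 0 := by
    intro b hb
    have h2 : ∑ i ∈ Finset.range (Fintype.card F), (∑ a : F, c a * a ^ i) * b ^ i = 0 := by
      apply Finset.sum_eq_zero; intro i hi
      rw [h i (Finset.mem_range.mp hi), zero_mul]
    have h3 : ∑ a : F, c a * ∑ i ∈ Finset.range (Fintype.card F), (a * b) ^ i = 0 := by
      calc ∑ a : F, c a * ∑ i ∈ Finset.range (Fintype.card F), (a * b) ^ i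
          = ∑ a : F, ∑ i ∈ Finset.range (Fintype.card F), c a * (a * b) ^ i := by
            simp [Finset.mul_sum]
        _ = ∑ i ∈ Finset.range (Fintype.card F), ∑ a : F, c a * (a * b) ^ i :=
            Finset.sum_comm
        _ = ∑ i ∈ Finset.range (Fintype.card F), (∑ a : F, c a * a ^ i) * b ^ i := by
            apply Finset.sum_congr rfl; intro i _
            rw [Finset.sum_mul]
            apply Finset.sum_congr rfl; intro a _
            rw [mul_pow]; ring
        _ = 0 := h2
    have h4 : ∑ a : F, (c a * if a * b = 1 then (0:F) else 1) = 0 := by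
      calc ∑ a : F, (c a * if a * b = 1 then (0:F) else 1)
          = ∑ a : F, c a * ∑ i ∈ Finset.range (Fintype.card F), (a * b) ^ i := by
            apply Finset.sum_congr rfl; intro a _
            rw [geom_sum_card]
        _ = 0 := h3
    have h5 : ∑ a : F, (c a - if a = b⁻¹ then c a else 0) = 0 := by
      calc ∑ a : F, (c a - if a = b⁻¹ then c a else 0)
          = ∑ a : F, (c a * if a * b = 1 then (0:F) else 1) := by
            apply Finset.sum_congr rfl; intro a _
            have hiff : (a * b = 1) ↔ (a = b⁻¹) := by
              constructor
              · intro hab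
                field_simp [eq_comm, ← hab]
                exact hab
              · rintro rfl; exact inv_mul_cancel₀ hb
            by_cases hcase : a = b⁻¹
            · rw [if_pos hcase, if_pos (hiff.mpr hcase)]; ring
            · rw [if_neg hcase, if_neg (fun hc => hcase (hiff.mp hc))]; ring
        _ = 0 := h4
    rw [Finset.sum_sub_distrib, hsum, Finset.sum_ite_eq' Finset.univ b⁻¹ c] at h5
    simpa using h5
  intro a
  rcases eq_or_ne a 0 with rfl | ha
  · have hne : ∀ b : F, b ≠ 0 → c b = 0 := by
      intro b hb
      have := key b⁻¹ (inv_ne_zero hb); rwa [inv_inv] at this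
    have : ∑ x : F, c x = c 0 := by
      apply Finset.sum_eq_single 0
      · intro x _ hx; exact hne x hx
      · intro hx; exact absurd (Finset.mem_univ 0) hx
    rw [hsum] at this; exact this.symm
  · have := key a⁻¹ (inv_ne_zero ha); rwa [inv_inv] at this

open MvPolynomial in
lemma pS_newton (s : Multiset F) (k : ℕ) (hk : 0 < k) :
    pS s k = (-1) ^ (k + 1) * k * s.esymm k -
      ∑ a ∈ (Finset.HasAntidiagonal.antidiagonal k).filter (fun a => a.1 ∈ Set.Ioo 0 k),
        (-1) ^ a.1 * s.esymm a.1 * pS s a.2 := by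
  obtain ⟨l, rfl⟩ : ∃ l : List F, s = ↑l := ⟨s.toList, (Multiset.coe_toList s).symm⟩
  have base := congrArg (MvPolynomial.aeval l.get)
    (MvPolynomial.psum_eq_mul_esymm_sub_sum (Fin l.length) F k hk)
  have haev : ∀ m : ℕ, MvPolynomial.aeval l.get (MvPolynomial.psum (Fin l.length) F m)
      = pS (↑l) m := by
    intro m
    rw [MvPolynomial.psum, map_sum]
    simp only [map_pow, MvPolynomial.aeval_X]
    rw [pS]
    have : (↑l : Multiset F) = Finset.univ.val.map l.get := by
      rw [Fin.univ_val_map, List.ofFn_get]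
    rw [this, Multiset.map_map]
    rfl
  have hesy : ∀ m : ℕ, MvPolynomial.aeval l.get (MvPolynomial.esymm (Fin l.length) F m)
      = Multiset.esymm (↑l) m := by
    intro m
    rw [MvPolynomial.aeval_esymm_eq_multiset_esymm]
    congr 1
    rw [Fin.univ_val_map, List.ofFn_get]
  rw [haev] at base
  rw [base, map_sub, map_mul, map_mul, map_pow, map_neg, map_one, map_natCast, hesy, map_sum]
  congr 1
  apply Finset.sum_congr rfl
  intro a _
  rw [map_mul, map_mul, map_pow, map_neg, map_one, hesy, haev]

lemma pS_eq_of_esymm_eq (R S : Multiset F) (K : ℕ)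
    (he : ∀ j, j < K → R.esymm j = S.esymm j) :
    ∀ j, 0 < j → j < K → pS R j = pS S j := by
  intro j
  induction j using Nat.strong_induction_on with
  | _ j IH =>
    intro hj hjK
    rw [pS_newton R j hj, pS_newton S j hj, he j hjK]
    congr 1
    apply Finset.sum_congr rfl
    intro a ha
    simp only [Finset.mem_filter, Finset.HasAntidiagonal.mem_antidiagonal, Set.mem_Ioo] at ha
    obtain ⟨hsum, h0, hlt⟩ := ha
    have ha2 : 0 < a.2 := by omega
    have ha2' : a.2 < j := by omega
    rw [he a.1 (lt_trans hlt hjK), IH a.2 ha2' ha2 (lt_trans ha2' hjK)]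


lemma count_sum_replicate (m : F → ℕ) (b : F) :
    (∑ a : F, Multiset.replicate (m a) a).count b = m b := by
  rw [Multiset.count_sum']
  rw [Finset.sum_eq_single b]
  · rw [Multiset.count_replicate, if_pos rfl]
  · intro x _ hx
    rw [Multiset.count_replicate, if_neg hx]
  · intro hb; exact absurd (Finset.mem_univ b) hb

lemma eq_sum_replicate_count (s : Multiset F) :
    s = ∑ a : F, Multiset.replicate (s.count a) a := by
  ext b
  rw [count_sum_replicate]

lemma pS_eq_sum_count (s : Multiset F) (k : ℕ) :
    pS s k = ∑ a : F, (s.count a : F) * a ^ k := by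
  conv_lhs => rw [eq_sum_replicate_count s]
  rw [pS, ← Multiset.coe_mapAddMonoidHom, map_sum, Multiset.sum_sum]
  simp only [Multiset.coe_mapAddMonoidHom]
  apply Finset.sum_congr rfl
  intro a _
  rw [Multiset.map_replicate, Multiset.sum_replicate, nsmul_eq_mul]

lemma card_eq_sum_count_univ (s : Multiset F) :
    Multiset.card s = ∑ a : F, s.count a := by
  conv_lhs => rw [eq_sum_replicate_count s]
  rw [Multiset.card_sum]
  simp [Multiset.card_replicate]


lemma prod_X_sub_C_nsmul {p : ℕ} [Fact p.Prime] [CharP F p] (V : Multiset F) :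
    ((p • V).map (fun a => X - C a)).prod
      = Polynomial.expand F p (((V.map (· ^ p)).map (fun a => X - C a)).prod) := by
  rw [Multiset.map_nsmul, Multiset.prod_nsmul, Multiset.map_map]
  rw [map_multiset_prod (Polynomial.expand F p), Multiset.map_map]
  rw [← Multiset.prod_map_pow]
  apply congrArg
  apply Multiset.map_congr rfl
  intro a _
  simp only [Function.comp_apply, map_sub, Polynomial.expand_X, Polynomial.expand_C]
  rw [sub_pow_char, ← Polynomial.C_pow]


lemma claim {p : ℕ} [Fact p.Prime] [CharP F p] :
    ∀ n : ℕ, ∀ f g : Polynomial F, f.Monic → g.Monic → f.natDegree = n → g.natDegree = n →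
      Multiset.card f.roots = n → Multiset.card g.roots = n → f ≠ g →
      ∃ a k : ℕ, 1 ≤ a ∧ a ≤ Fintype.card F - 1 ∧
        n - (f - g).natDegree = a * p ^ k ∧ n - (f - g).natDegree ≤ n := by
  have hp := (Fact.out : p.Prime)
  intro n
  induction n using Nat.strong_induction_on with
  | _ n IH =>
    intro f g hf hg hfd hgd hfr hgr hne
    rcases Nat.eq_zero_or_pos n with rfl | hn
    · exact absurd ((hf.natDegree_eq_zero.mp hfd).trans
        (hg.natDegree_eq_zero.mp hgd).symm) hne
    have hq2 : 2 ≤ Fintype.card F := Fintype.one_lt_card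
    have hd0 : f - g ≠ 0 := sub_ne_zero.mpr hne
    have hdeg : (f - g).natDegree < n := by
      have h1 : (f - g).degree < f.degree := by
        apply Polynomial.degree_sub_lt _ hf.ne_zero
        · rw [hf.leadingCoeff, hg.leadingCoeff]
        · rw [Polynomial.degree_eq_natDegree hf.ne_zero,
            Polynomial.degree_eq_natDegree hg.ne_zero, hfd, hgd]
      have := Polynomial.natDegree_lt_natDegree hd0 h1
      rwa [hfd] at this
    set Nd := (f - g).natDegree with hNd
    set N := n - Nd with hNdef
    have hN1 : 1 ≤ N := by omega
    have hNn : N ≤ n := by omega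
    have hcoeff : ∀ j, j < N → f.coeff (n - j) = g.coeff (n - j) := by
      intro j hj
      have hlt : Nd < n - j := by omega
      have := Polynomial.coeff_eq_zero_of_natDegree_lt (p := f - g) hlt
      rw [Polynomial.coeff_sub, sub_eq_zero] at this
      exact this
    -- root multisets
    set R := f.roots with hR
    set S := g.roots with hS
    have hfp : f = (R.map (fun a => X - C a)).prod := by
      have := Polynomial.C_leadingCoeff_mul_prod_multiset_X_sub_C
        (p := f) (by rw [hfr, hfd])
      rw [hf.leadingCoeff, map_one, one_mul] at this
      exact this.symm
    have hgp : g = (S.map (fun a => X - C a)).prod := by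
      have := Polynomial.C_leadingCoeff_mul_prod_multiset_X_sub_C
        (p := g) (by rw [hgr, hgd])
      rw [hg.leadingCoeff, map_one, one_mul] at this
      exact this.symm
    have hesymm : ∀ j, j < N → R.esymm j = S.esymm j := by
      intro j hj
      have hjn : j ≤ n := by omega
      have h1 := Multiset.prod_X_sub_C_coeff R (k := n - j) (by rw [hfr]; omega)
      have h2 := Multiset.prod_X_sub_C_coeff S (k := n - j) (by rw [hgr]; omega)
      rw [hfr] at h1
      rw [hgr] at h2
      have hnj : n - (n - j) = j := by omega
      rw [hnj] at h1 h2
      have h3 : ((-1 : F)) ^ j * R.esymm j = ((-1 : F)) ^ j * S.esymm j := by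
        rw [← h1, ← h2, ← hfp, ← hgp]
        exact hcoeff j hj
      exact mul_left_cancel₀ (pow_ne_zero j (neg_ne_zero.mpr one_ne_zero)) h3
    by_cases hNq : N ≤ Fintype.card F - 1
    · exact ⟨N, 0, hN1, hNq, by rw [pow_zero, mul_one], hNn⟩
    -- now q ≤ N
    push_neg at hNq
    have hqN : Fintype.card F ≤ N := by omega
    have hpsum : ∀ i, 0 < i → i < N → pS R i = pS S i := pS_eq_of_esymm_eq R S N hesymm
    set c : F → F := fun a => (R.count a : F) - (S.count a : F) with hc
    have hmom : ∀ i, i < Fintype.card F → ∑ a : F, c a * a ^ i = 0 := by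
      intro i hi
      rcases Nat.eq_zero_or_pos i with rfl | hipos
      · have hRn : ∑ a : F, (R.count a : F) = (n : F) := by
          rw [← Nat.cast_sum, ← card_eq_sum_count_univ, hfr]
        have hSn : ∑ a : F, (S.count a : F) = (n : F) := by
          rw [← Nat.cast_sum, ← card_eq_sum_count_univ, hgr]
        simp only [pow_zero, mul_one, hc]
        rw [Finset.sum_sub_distrib, hRn, hSn, sub_self]
      · have hiN : i < N := by omega
        have := hpsum i hipos hiN
        rw [pS_eq_sum_count, pS_eq_sum_count] at this
        simp only [hc, sub_mul]
        rw [Finset.sum_sub_distrib, this, sub_self]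
    have hcnt : ∀ a : F, R.count a % p = S.count a % p := by
      intro a
      have h0 := moments_zero c hmom a
      have : (R.count a : F) = (S.count a : F) := by
        simp only [hc] at h0
        exact sub_eq_zero.mp h0
      exact (CharP.natCast_eq_natCast F p).mp this
    classical
    set U : Multiset F := ∑ a : F, Multiset.replicate (R.count a % p) a with hU
    set VR : Multiset F := ∑ a : F, Multiset.replicate (R.count a / p) a with hVR
    set VS : Multiset F := ∑ a : F, Multiset.replicate (S.count a / p) a with hVS
    have hRU : R = U + p • VR := by
      ext b
      rw [Multiset.count_add, Multiset.count_nsmul, hU, hVR,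
        count_sum_replicate, count_sum_replicate]
      exact (Nat.mod_add_div _ _).symm
    have hSU : S = U + p • VS := by
      ext b
      rw [Multiset.count_add, Multiset.count_nsmul, hU, hVS,
        count_sum_replicate, count_sum_replicate, hcnt b]
      exact (Nat.mod_add_div _ _).symm
    set u : Polynomial F := (U.map (fun a => X - C a)).prod with hu
    set wR : Polynomial F := (((VR.map (· ^ p)).map (fun a => X - C a)).prod) with hwR
    set wS : Polynomial F := (((VS.map (· ^ p)).map (fun a => X - C a)).prod) with hwS
    have hfu : f = u * Polynomial.expand F p wR := by
      rw [hfp, hRU, Multiset.map_add, Multiset.prod_add, prod_X_sub_C_nsmul]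
    have hgu : g = u * Polynomial.expand F p wS := by
      rw [hgp, hSU, Multiset.map_add, Multiset.prod_add, prod_X_sub_C_nsmul]
    have humonic : u.Monic :=
      Polynomial.monic_multiset_prod_of_monic _ _ (fun a _ => Polynomial.monic_X_sub_C a)
    have hwRmonic : wR.Monic :=
      Polynomial.monic_multiset_prod_of_monic _ _ (fun a _ => Polynomial.monic_X_sub_C a)
    have hwSmonic : wS.Monic :=
      Polynomial.monic_multiset_prod_of_monic _ _ (fun a _ => Polynomial.monic_X_sub_C a)
    have hudeg : u.natDegree = Multiset.card U :=
      Polynomial.natDegree_multiset_prod_X_sub_C_eq_card U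
    have hwRdeg : wR.natDegree = Multiset.card VR := by
      rw [hwR, Polynomial.natDegree_multiset_prod_X_sub_C_eq_card, Multiset.card_map]
    have hwSdeg : wS.natDegree = Multiset.card VS := by
      rw [hwS, Polynomial.natDegree_multiset_prod_X_sub_C_eq_card, Multiset.card_map]
    have hcardR : Multiset.card U + p * Multiset.card VR = n := by
      have := congrArg Multiset.card hRU
      rw [hfr, Multiset.card_add, Multiset.card_nsmul] at this
      omega
    have hcardS : Multiset.card U + p * Multiset.card VS = n := by
      have := congrArg Multiset.card hSU
      rw [hgr, Multiset.card_add, Multiset.card_nsmul] at this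
      omega
    have hVRS : Multiset.card VR = Multiset.card VS := by
      have hppos : 0 < p := hp.pos
      have h1 : p * Multiset.card VR = p * Multiset.card VS := by omega
      exact Nat.eq_of_mul_eq_mul_left hppos h1
    set e' : ℕ := Multiset.card VR with he'
    have hwne : wR ≠ wS := by
      intro hEq
      exact hne (by rw [hfu, hgu, hEq])
    have he'pos : 1 ≤ e' := by
      by_contra hcon
      have h0 : e' = 0 := by omega
      have hVR0 : VR = 0 := Multiset.card_eq_zero.mp (by rw [← he']; exact h0)
      have hVS0 : VS = 0 := Multiset.card_eq_zero.mp (by omega)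
      apply hwne
      rw [hwR, hwS, hVR0, hVS0]
    have he'n : e' < n := by
      have := hp.two_le
      nlinarith
    have hwRroots : Multiset.card wR.roots = e' := by
      rw [hwR, Polynomial.roots_multiset_prod_X_sub_C, Multiset.card_map]
    have hwSroots : Multiset.card wS.roots = e' := by
      rw [hwS, Polynomial.roots_multiset_prod_X_sub_C, Multiset.card_map, ← hVRS]
    obtain ⟨a, k, ha1, ha2, hM, hMle⟩ :=
      IH e' he'n wR wS hwRmonic hwSmonic hwRdeg (hwSdeg.trans hVRS.symm) hwRroots hwSroots hwne
    set M := e' - (wR - wS).natDegree with hMdef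
    -- compute Nd
    have hwdne : wR - wS ≠ 0 := sub_ne_zero.mpr hwne
    have hexpne : Polynomial.expand F p (wR - wS) ≠ 0 := by
      rw [Ne, Polynomial.expand_eq_zero hp.pos]
      exact hwdne
    have hdiff : f - g = u * Polynomial.expand F p (wR - wS) := by
      rw [hfu, hgu, ← mul_sub, map_sub]
    have hNdeq : Nd = Multiset.card U + (wR - wS).natDegree * p := by
      rw [hNd, hdiff, Polynomial.natDegree_mul humonic.ne_zero hexpne,
        Polynomial.natDegree_expand, hudeg]
    have hwdlt : (wR - wS).natDegree < e' := by
      have h1 : (wR - wS).degree < wR.degree := by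
        apply Polynomial.degree_sub_lt _ hwRmonic.ne_zero
        · rw [hwRmonic.leadingCoeff, hwSmonic.leadingCoeff]
        · rw [Polynomial.degree_eq_natDegree hwRmonic.ne_zero,
            Polynomial.degree_eq_natDegree hwSmonic.ne_zero, hwRdeg, hwSdeg, hVRS]
      have := Polynomial.natDegree_lt_natDegree hwdne h1
      rwa [hwRdeg] at this
    have hA : Multiset.card U + e' * p = n := by
      rw [mul_comm]; exact hcardR
    have h1 : M * p = e' * p - (wR - wS).natDegree * p := by
      rw [hMdef, tsub_mul]
    have hNM : N = M * p := by omega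
    refine ⟨a, k + 1, ha1, ha2, ?_, hNn⟩
    have hgoal : N = a * p ^ (k + 1) := by
      rw [hNM, hM, pow_succ]; ring
    exact hgoal

end Stmt1Aux

/-- Let `f, g ∈ 𝔽_q[x]` be monic of degree `n`, both splitting into root factors over
`𝔽_q` (i.e. having `n` roots in `𝔽_q` counted with multiplicity). If the coefficients
of `x^{n-j}` of `f` and `g` coincide for every `j ∈ [n]_q`, then `f = g`. -/
theorem stmt1 (p : ℕ) (hp : p.Prime) (F : Type*) [Field F] [Fintype F] [CharP F p]
    (n : ℕ) (hn : 0 < n) (f g : Polynomial F)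
    (hf : f.Monic) (hg : g.Monic)
    (hfd : f.natDegree = n) (hgd : g.natDegree = n)
    (hfsplit : (f.roots).card = n) (hgsplit : (g.roots).card = n)
    (h : ∀ j : ℕ,
      (∃ a k : ℕ, 1 ≤ a ∧ a ≤ Fintype.card F - 1 ∧ j = a * p ^ k ∧ j ≤ n) →
      f.coeff (n - j) = g.coeff (n - j)) :
    f = g := by
  classical
  by_contra hne
  haveI : Fact p.Prime := ⟨hp⟩
  obtain ⟨a, k, ha1, ha2, hN, hNle⟩ :=
    Stmt1Aux.claim (p := p) n f g hf hg hfd hgd hfsplit hgsplit hne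
  have hco := h (n - (f - g).natDegree) ⟨a, k, ha1, ha2, hN, hNle⟩
  have hNd_le : (f - g).natDegree ≤ n := by
    have := Polynomial.natDegree_sub_le f g
    rw [hfd, hgd] at this
    simpa using this
  have hNd_lt : (f - g).natDegree < n := by
    rcases Nat.lt_or_ge ((f - g).natDegree) n with h' | h'
    · exact h'
    · exfalso
      have h0 : n - (f - g).natDegree = 0 := by omega
      rw [h0] at hN
      have : 0 < a * p ^ k := Nat.mul_pos (by omega) (Nat.pow_pos (n := k) hp.pos)
      omega
  have heq : n - (n - (f - g).natDegree) = (f - g).natDegree := by omega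
  rw [heq] at hco
  have hd0 : f - g ≠ 0 := sub_ne_zero.mpr hne
  have hlead : (f - g).coeff ((f - g).natDegree) ≠ 0 :=
    Polynomial.leadingCoeff_ne_zero.mpr hd0
  apply hlead
  rw [Polynomial.coeff_sub, hco, sub_self]
end

section
/- Let F be an arbitrary field and f = ∑_{i=0}^d c_i x^i ∈ F[x] a polynomial whose formal derivative f′ is not the zero polynomial. Assume c_0 ≠ 0 and c_1 = c_2 = ⋯ = c_m = 0 for some m ≥ 0. Then f has at least m+1 distinct roots in an algebraic closure of F. -/
/-!
Over an algebraic closure `f` splits, so its roots counted with multiplicity number `deg f`.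
A root of multiplicity `k` is a root of `f′` of multiplicity at least `k - 1`, and `0`, which is
not a root of `f`, is a root of `f′` of multiplicity at least `m`. Hence, if `f` has `n` distinct
roots, `f′` has at least `deg f - n + m` roots; as `f′ ≠ 0` has degree below `deg f`, `n ≥ m + 1`.
-/

open Polynomial Multiset

namespace Polynomial

theorem X_pow_dvd_derivative_of_coeff_eq_zero {R : Type*} [Semiring R] {f : R[X]} {m : ℕ}
    (hc : ∀ i : ℕ, 1 ≤ i → i ≤ m → f.coeff i = 0) : X ^ m ∣ derivative f := by
  rw [X_pow_dvd_iff]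
  intro d hd
  rw [coeff_derivative, hc (d + 1) (Nat.le_add_left 1 d) hd, zero_mul]

variable {R : Type*} [CommRing R] [IsDomain R] [DecidableEq R] {p : R[X]} {m : ℕ}

theorem replicate_add_roots_le_roots_derivative_add_dedup (hp' : derivative p ≠ 0)
    (h0 : ¬p.IsRoot 0) (hm : X ^ m ∣ derivative p) :
    replicate m 0 + p.roots ≤ (derivative p).roots + p.roots.dedup := by
  rw [Multiset.le_iff_count]
  intro r
  simp only [count_add, count_replicate, count_dedup, count_roots]
  by_cases hr : r = 0
  · subst hr
    have hm0 : m ≤ rootMultiplicity 0 (derivative p) :=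
      (le_rootMultiplicity_iff hp').2 (by simpa using hm)
    rw [rootMultiplicity_eq_zero h0]
    split_ifs <;> omega
  · have hp : p ≠ 0 := by
      rintro rfl
      exact hp' derivative_zero
    have hdrop := rootMultiplicity_sub_one_le_derivative_rootMultiplicity_of_ne_zero p r hp'
    have hroot : r ∉ p.roots → rootMultiplicity r p = 0 := fun h =>
      rootMultiplicity_eq_zero fun hr' => h ((mem_roots hp).2 hr')
    split_ifs <;> grind

theorem add_card_roots_le_card_roots_derivative_add_card_toFinset (hp' : derivative p ≠ 0)
    (h0 : ¬p.IsRoot 0) (hm : X ^ m ∣ derivative p) :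
    m + card p.roots ≤ card (derivative p).roots + p.roots.toFinset.card := by
  simpa [Multiset.card_toFinset] using
    card_le_card (replicate_add_roots_le_roots_derivative_add_dedup hp' h0 hm)

end Polynomial

open scoped Classical in
/-- Let `F` be a field and `f ∈ F[x]` a polynomial with nonzero formal derivative,
nonzero constant term, and vanishing coefficients in degrees `1, …, m`. Then `f`
has at least `m + 1` distinct roots in an algebraic closure of `F`. -/
theorem stmt2 (F : Type*) [Field F] (f : Polynomial F) (m : ℕ)
    (hf' : Polynomial.derivative f ≠ 0)
    (h0 : f.coeff 0 ≠ 0)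
    (hc : ∀ i : ℕ, 1 ≤ i → i ≤ m → f.coeff i = 0) :
    m + 1 ≤ (f.map (algebraMap F (AlgebraicClosure F))).roots.toFinset.card := by
  set g := f.map (algebraMap F (AlgebraicClosure F))
  have hg' : derivative g ≠ 0 := by
    rw [derivative_map]
    exact map_ne_zero hf'
  have hg0 : ¬g.IsRoot 0 := by
    rw [IsRoot, ← coeff_zero_eq_eval_zero, coeff_map]
    simpa using h0
  have hXm : X ^ m ∣ derivative g :=
    X_pow_dvd_derivative_of_coeff_eq_zero fun i h1 h2 => by simp [g, hc i h1 h2]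
  have hcount := add_card_roots_le_card_roots_derivative_add_card_toFinset hg' hg0 hXm
  have hsplit : card g.roots = g.natDegree := splits_iff_card_roots.1 (IsAlgClosed.splits g)
  have hdeg' : card (derivative g).roots ≤ (derivative g).natDegree := card_roots' _
  have hlt : (derivative g).natDegree < g.natDegree :=
    natDegree_derivative_lt fun h => hg' (derivative_of_natDegree_zero h)
  omega
end

section
/- Let q be a power of a prime p and let 𝒪 : 𝔽_q^× → ℤ_{≥0} be any map. Consider the polynomial G_𝒪(x) := ∏_{a ∈ 𝔽_q^×} (1 + a·x)^{𝒪(a)} ∈ 𝔽_q[x]. If the coefficients of x^1, x^2, …, x^{q−1} in G_𝒪(x) are all zero, then p divides 𝒪(a) for every a ∈ 𝔽_q^×. -/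
/-!
Write `G = ∏ₐ (1 + a X)^{𝒪(a)}` and `P = ∏ₐ (1 + a X)`. The hypothesis says `G ≡ 1 mod X^q`,
and since `q = 0` in `𝔽_q` this forces `G' ≡ 0 mod X^q`. The logarithmic derivative gives
`G' P = G S` with `S = ∑ₐ 𝒪(a) a ∏_{c ≠ a} (1 + c X)`, so `S ≡ 0 mod X^q` because `G` is a unit
modulo `X^q`. As `deg S ≤ q - 2`, `S = 0`, and evaluating at `-a⁻¹` kills every summand but
the one of `a`, leaving `𝒪(a) a ∏_{c ≠ a} (1 - c a⁻¹) = 0`, i.e. `𝒪(a) = 0` in `𝔽_q`.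
-/

open Polynomial Finset

namespace Polynomial

theorem X_pow_dvd_derivative {R : Type*} [CommSemiring R] {f : R[X]} {n : ℕ}
    (hn : (n : R) = 0) (h : X ^ n ∣ f) : X ^ n ∣ derivative f := by
  obtain ⟨g, rfl⟩ := h
  rw [derivative_mul, derivative_X_pow, hn, C_0, zero_mul, zero_mul, zero_add, mul_comm]
  exact dvd_mul_left _ _

theorem derivative_pow_mul_self {R : Type*} [CommSemiring R] (f : R[X]) (n : ℕ) :
    derivative (f ^ n) * f = C (n : R) * f ^ n * derivative f := by
  rcases eq_or_ne n 0 with rfl | hn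
  · simp
  · rw [derivative_pow, ← pow_sub_one_mul hn f]
    ring

theorem derivative_prod_pow_mul_prod {R ι : Type*} [CommSemiring R] [DecidableEq ι]
    (s : Finset ι) (f : ι → R[X]) (n : ι → ℕ) :
    derivative (∏ i ∈ s, f i ^ n i) * ∏ i ∈ s, f i =
      (∏ i ∈ s, f i ^ n i) * ∑ i ∈ s, C (n i : R) * derivative (f i) * ∏ j ∈ s.erase i, f j := by
  rw [derivative_prod_finset, sum_mul, mul_sum]
  refine sum_congr rfl fun i hi => ?_
  rw [← mul_prod_erase s f hi, ← mul_prod_erase s (fun j => f j ^ n j) hi]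
  calc (∏ j ∈ s.erase i, f j ^ n j) * derivative (f i ^ n i) * (f i * ∏ j ∈ s.erase i, f j)
      = (∏ j ∈ s.erase i, f j ^ n j) * (derivative (f i ^ n i) * f i) *
          ∏ j ∈ s.erase i, f j := by ring
    _ = _ := by rw [derivative_pow_mul_self]; ring

theorem natDegree_sum_C_mul_prod_erase_le {R : Type*} [CommSemiring R] [DecidableEq Rˣ]
    (s : Finset Rˣ) (w : Rˣ → R) :
    (∑ b ∈ s, C (w b) * ∏ c ∈ s.erase b, (1 + C (c : R) * X)).natDegree ≤ s.card - 1 := by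
  refine natDegree_sum_le_of_forall_le _ _ fun b hb => ?_
  calc (C (w b) * ∏ c ∈ s.erase b, (1 + C (c : R) * X)).natDegree
      ≤ ∑ c ∈ s.erase b, (1 + C (c : R) * X).natDegree :=
        (natDegree_C_mul_le _ _).trans (natDegree_prod_le _ _)
    _ ≤ ∑ _c ∈ s.erase b, (1 : ℕ) := by gcongr; compute_degree
    _ = s.card - 1 := by rw [sum_const, card_erase_of_mem hb, smul_eq_mul, mul_one]

variable {R : Type*} [CommRing R]

theorem eval_neg_inv_one_add_C_mul_X_eq_zero_iff (a c : Rˣ) :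
    (1 + C (c : R) * X).eval (-((a⁻¹ : Rˣ) : R)) = 0 ↔ c = a := by
  rw [eval_add, eval_one, eval_mul, eval_C, eval_X, mul_neg, ← sub_eq_add_neg, sub_eq_zero,
    eq_comm, ← Units.val_mul, Units.val_eq_one, mul_inv_eq_one, eq_comm]

theorem eq_zero_of_sum_C_mul_prod_erase_eq_zero [IsDomain R] [DecidableEq Rˣ] {s : Finset Rˣ}
    {w : Rˣ → R} (h : ∑ b ∈ s, C (w b) * ∏ c ∈ s.erase b, (1 + C (c : R) * X) = 0)
    {a : Rˣ} (ha : a ∈ s) : w a = 0 := by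
  have hvanish : ∀ b ∈ s,
      (∏ c ∈ s.erase b, (1 + C (c : R) * X)).eval (-((a⁻¹ : Rˣ) : R)) = 0 ↔ b ≠ a := by
    intro b _
    simp only [eval_prod, prod_eq_zero_iff, eval_neg_inv_one_add_C_mul_X_eq_zero_iff,
      mem_erase, exists_eq_right, ha, and_true]
    exact ne_comm
  have hsum := congrArg (eval (-((a⁻¹ : Rˣ) : R))) h
  rw [eval_finsetSum, sum_eq_single_of_mem a ha fun b hb hba => by
    rw [eval_mul, (hvanish b hb).2 hba, mul_zero], eval_mul, eval_C, eval_zero] at hsum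
  exact (mul_eq_zero.1 hsum).resolve_right (by simpa using (hvanish a ha).not)

end Polynomial

open scoped Classical in
theorem stmt3_general (p : ℕ) (F : Type*) [Field F] [Fintype F] [CharP F p]
    (O : Fˣ → ℕ)
    (h : ∀ i : ℕ, 1 ≤ i → i ≤ Fintype.card F - 1 →
      (∏ a : Fˣ, (1 + Polynomial.C (a : F) * Polynomial.X) ^ O a).coeff i = 0) :
    ∀ a : Fˣ, p ∣ O a := by
  intro a
  set G := ∏ b : Fˣ, (1 + C (b : F) * X) ^ O b
  set S := ∑ b : Fˣ, C ((O b : F) * b) * ∏ c ∈ univ.erase b, (1 + C (c : F) * X)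
  have hG : X ^ Fintype.card F ∣ G - 1 := X_pow_dvd_iff.2 fun i hi => by
    rcases Nat.eq_zero_or_pos i with rfl | hi0
    · simp [G, coeff_zero_eq_eval_zero, eval_prod]
    · rw [coeff_sub, h i hi0 (by omega), coeff_one, if_neg hi0.ne', sub_zero]
  have hGS : X ^ Fintype.card F ∣ G * S := by
    have hG' := X_pow_dvd_derivative (Nat.cast_card_eq_zero F) hG
    rw [derivative_sub, derivative_one, sub_zero] at hG'
    have hlog : derivative G * ∏ b : Fˣ, (1 + C (b : F) * X) = G * S := by
      rw [derivative_prod_pow_mul_prod]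
      refine congrArg (G * ·) (sum_congr rfl fun b _ => ?_)
      rw [derivative_add, derivative_one, derivative_C_mul_X, zero_add, C_mul]
    exact hlog ▸ hG'.mul_right _
  have hS : X ^ Fintype.card F ∣ S := by
    convert dvd_sub hGS (hG.mul_right S) using 1
    ring
  have hS0 : S = 0 := by
    have hdeg : S.natDegree ≤ Fintype.card Fˣ - 1 := natDegree_sum_C_mul_prod_erase_le univ _
    rw [Fintype.card_units] at hdeg
    refine eq_zero_of_dvd_of_natDegree_lt hS ?_
    rw [natDegree_X_pow]
    have := Fintype.card_pos (α := F)
    omega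
  have hOa := eq_zero_of_sum_C_mul_prod_erase_eq_zero hS0 (mem_univ a)
  exact (CharP.cast_eq_zero_iff F p _).1 ((mul_eq_zero.1 hOa).resolve_right a.ne_zero)

open scoped Classical in
/-- Let `𝒪 : 𝔽_q^× → ℤ_{≥0}` and `G_𝒪(x) = ∏_{a ∈ 𝔽_q^×} (1 + a x)^{𝒪(a)}`.
If the coefficients of `x, x², …, x^{q-1}` in `G_𝒪` all vanish, then `p ∣ 𝒪(a)`
for every `a ∈ 𝔽_q^×`. -/
theorem stmt3 (p : ℕ) (hp : p.Prime) (F : Type*) [Field F] [Fintype F] [CharP F p]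
    (O : Fˣ → ℕ)
    (h : ∀ i : ℕ, 1 ≤ i → i ≤ Fintype.card F - 1 →
      (∏ a : Fˣ, (1 + Polynomial.C (a : F) * Polynomial.X) ^ O a).coeff i = 0) :
    ∀ a : Fˣ, p ∣ O a :=
  stmt3_general p F O h
end

section
/- Let q be a power of a prime p and let 𝒪, 𝒫 : 𝔽_q^× → {0,1,…,q−1} be two maps. Write G_𝒪(x) = ∑_j b_j x^j and G_𝒫(x) = ∑_j c_j x^j. If b_j = c_j for j = 1, 2, …, q−1, then 𝒪(a) ≡ 𝒫(a) (mod p) for all a ∈ 𝔽_q^×. -/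
open Polynomial Finset

private lemma cast_mul_pow_pred {R : Type*} [CommRing R] (x : R[X]) (n : ℕ) :
    C (n : R) * (x ^ (n - 1) * x) = C (n : R) * x ^ n := by
  cases n with
  | zero => simp
  | succ n => rw [Nat.add_sub_cancel, ← pow_succ]

private lemma deriv_prod_pow {ι R : Type*} [CommRing R] [DecidableEq ι]
    (s : Finset ι) (f : ι → R[X]) (N : ι → ℕ) :
    Polynomial.derivative (∏ i ∈ s, f i ^ N i) * ∏ i ∈ s, f i =
      (∏ i ∈ s, f i ^ N i) *
        ∑ i ∈ s, C (N i : R) * Polynomial.derivative (f i) * ∏ j ∈ s.erase i, f j := by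
  induction s using Finset.induction with
  | empty => simp
  | @insert a s ha ih =>
    rw [prod_insert ha, prod_insert ha, sum_insert ha, derivative_mul, derivative_pow]
    rw [erase_insert ha]
    have herase : ∀ i ∈ s, ∏ j ∈ (insert a s).erase i, f j = f a * ∏ j ∈ s.erase i, f j := by
      intro i hi
      rw [erase_insert_of_ne (by rintro rfl; exact ha hi),
        prod_insert (fun hm => ha (mem_of_mem_erase hm))]
    rw [Finset.sum_congr rfl (fun i hi => by rw [herase i hi])]
    have key : C ((N a : R)) * (f a ^ (N a - 1) * f a) = C (N a : R) * f a ^ N a :=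
      cast_mul_pow_pred (f a) (N a)
    have hs : ∑ i ∈ s, C (N i : R) * Polynomial.derivative (f i) * (f a * ∏ j ∈ s.erase i, f j)
        = f a * ∑ i ∈ s, C (N i : R) * Polynomial.derivative (f i) * ∏ j ∈ s.erase i, f j := by
      rw [mul_sum]; exact sum_congr rfl fun i _ => by ring
    rw [hs]
    linear_combination (Polynomial.derivative (f a) * (∏ x ∈ s, f x ^ N x) * ∏ x ∈ s, f x) * key
      + (f a ^ N a * f a) * ih

open scoped Classical in
/-- Let `𝒪, 𝒫 : 𝔽_q^× → {0, 1, …, q-1}` and write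
`G_𝒪(x) = ∏_{a ∈ 𝔽_q^×} (1 + a x)^{𝒪(a)} = ∑_j b_j x^j`,
`G_𝒫(x) = ∏_{a ∈ 𝔽_q^×} (1 + a x)^{𝒫(a)} = ∑_j c_j x^j`.
If `b_j = c_j` for `j = 1, …, q-1`, then `𝒪(a) ≡ 𝒫(a) (mod p)` for all
`a ∈ 𝔽_q^×`. -/
theorem stmt4 (p : ℕ) (hp : p.Prime) (F : Type*) [Field F] [Fintype F] [CharP F p]
    (O P : Fˣ → ℕ)
    (hO : ∀ a : Fˣ, O a ≤ Fintype.card F - 1)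
    (hP : ∀ a : Fˣ, P a ≤ Fintype.card F - 1)
    (h : ∀ j : ℕ, 1 ≤ j → j ≤ Fintype.card F - 1 →
      (∏ a : Fˣ, (1 + Polynomial.C (a : F) * Polynomial.X) ^ O a).coeff j =
      (∏ a : Fˣ, (1 + Polynomial.C (a : F) * Polynomial.X) ^ P a).coeff j) :
    ∀ a : Fˣ, O a ≡ P a [MOD p] := by
  classical
  set q := Fintype.card F with hq
  have hq2 : 2 ≤ q := Fintype.one_lt_card
  set L : Fˣ → F[X] := fun a => 1 + C (a : F) * X with hL
  set G : F[X] := ∏ a : Fˣ, L a ^ O a with hG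
  set H : F[X] := ∏ a : Fˣ, L a ^ P a with hH
  have hdL : ∀ a : Fˣ, Polynomial.derivative (L a) = C (a : F) := by
    intro a; simp [hL]
  -- constant coefficients are 1
  have hG0 : G.coeff 0 = 1 := by
    rw [coeff_zero_eq_eval_zero, hG, eval_prod]
    simp [hL]
  have hH0 : H.coeff 0 = 1 := by
    rw [coeff_zero_eq_eval_zero, hH, eval_prod]
    simp [hL]
  -- all low coefficients agree
  have hcoe : ∀ m : ℕ, m ≤ q - 1 → G.coeff m = H.coeff m := by
    intro m hm
    match m with
    | 0 => rw [hG0, hH0]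
    | (m + 1) => exact h (m + 1) (by omega) hm
  -- the Wronskian-type combination has vanishing low coefficients
  have key : ∀ j : ℕ, j ≤ q - 2 →
      (Polynomial.derivative G * H - G * Polynomial.derivative H).coeff j = 0 := by
    intro j hj
    have h1 : (Polynomial.derivative G * H).coeff j = (Polynomial.derivative H * H).coeff j := by
      rw [coeff_mul, coeff_mul]
      refine Finset.sum_congr rfl fun x hx => ?_
      rw [Finset.HasAntidiagonal.mem_antidiagonal] at hx
      rw [coeff_derivative, coeff_derivative, hcoe (x.1 + 1) (by omega)]
    have h2 : (G * Polynomial.derivative H).coeff j = (H * Polynomial.derivative H).coeff j := by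
      rw [coeff_mul, coeff_mul]
      refine Finset.sum_congr rfl fun x hx => ?_
      rw [Finset.HasAntidiagonal.mem_antidiagonal] at hx
      rw [coeff_derivative, hcoe x.1 (by omega)]
    rw [coeff_sub, h1, h2, ← coeff_sub, mul_comm, sub_self, coeff_zero]
  -- define the S polynomials
  set SO : F[X] := ∑ a : Fˣ, C ((O a : F)) * Polynomial.derivative (L a) *
      ∏ b ∈ Finset.univ.erase a, L b with hSO
  set SP : F[X] := ∑ a : Fˣ, C ((P a : F)) * Polynomial.derivative (L a) *
      ∏ b ∈ Finset.univ.erase a, L b with hSP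
  set S : F[X] := SO - SP with hS
  set Pi : F[X] := ∏ a : Fˣ, L a with hPi
  have hGA : Polynomial.derivative G * Pi = G * SO := deriv_prod_pow Finset.univ L O
  have hHA : Polynomial.derivative H * Pi = H * SP := deriv_prod_pow Finset.univ L P
  have hE : (Polynomial.derivative G * H - G * Polynomial.derivative H) * Pi = G * H * S := by
    rw [hS]; linear_combination H * hGA - G * hHA
  -- hence G*H*S has vanishing low coefficients
  have hlow : ∀ j : ℕ, j ≤ q - 2 → (G * H * S).coeff j = 0 := by
    intro j hj
    rw [← hE, coeff_mul]
    refine Finset.sum_eq_zero fun x hx => ?_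
    rw [Finset.HasAntidiagonal.mem_antidiagonal] at hx
    rw [key x.1 (by omega), zero_mul]
  -- degree bound on S
  have hcard : Fintype.card Fˣ = q - 1 := Fintype.card_units F
  have hLdeg : ∀ b : Fˣ, (L b).natDegree ≤ 1 := by
    intro b
    refine le_trans (natDegree_add_le _ _) ?_
    simp only [natDegree_one, max_le_iff]
    exact ⟨Nat.zero_le _, le_trans (natDegree_C_mul_le _ _) (by simp)⟩
  have hterm : ∀ (N : Fˣ → ℕ) (a : Fˣ),
      (C ((N a : F)) * Polynomial.derivative (L a) * ∏ b ∈ Finset.univ.erase a, L b).natDegree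
        ≤ q - 2 := by
    intro N a
    rw [hdL, ← C_mul]
    refine le_trans (natDegree_C_mul_le _ _) ?_
    refine le_trans (natDegree_prod_le _ _) ?_
    refine le_trans (Finset.sum_le_card_nsmul _ _ 1 (fun b _ => hLdeg b)) ?_
    simp only [smul_eq_mul, mul_one]
    rw [Finset.card_erase_of_mem (Finset.mem_univ a), Finset.card_univ, hcard]
    omega
  have hSdeg : S.natDegree ≤ q - 2 := by
    rw [hS]
    refine le_trans (natDegree_sub_le _ _) (max_le ?_ ?_)
    · exact natDegree_sum_le_of_forall_le _ _ fun a _ => hterm O a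
    · exact natDegree_sum_le_of_forall_le _ _ fun a _ => hterm P a
  -- S must be zero
  have hGne : G ≠ 0 := fun hc => by simp [hc] at hG0
  have hHne : H ≠ 0 := fun hc => by simp [hc] at hH0
  have hSzero : S = 0 := by
    by_contra hSne
    have hGH : G * H ≠ 0 := mul_ne_zero hGne hHne
    have hne : G * H * S ≠ 0 := mul_ne_zero hGH hSne
    have ntdG : G.natTrailingDegree = 0 :=
      natTrailingDegree_eq_zero.mpr (Or.inr (by rw [hG0]; exact one_ne_zero))
    have ntdH : H.natTrailingDegree = 0 :=
      natTrailingDegree_eq_zero.mpr (Or.inr (by rw [hH0]; exact one_ne_zero))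
    have hntd : (G * H * S).natTrailingDegree = S.natTrailingDegree := by
      rw [natTrailingDegree_mul hGH hSne, natTrailingDegree_mul hGne hHne, ntdG, ntdH]
      omega
    have hle : (G * H * S).natTrailingDegree ≤ q - 2 := by
      rw [hntd]; exact le_trans (natTrailingDegree_le_natDegree _) hSdeg
    have := hlow _ hle
    exact hne (coeff_natTrailingDegree_eq_zero.mp this)
  -- evaluate at -(a : F)⁻¹
  intro a
  have ha0 : (a : F) ≠ 0 := Units.ne_zero a
  set t : F := -(a : F)⁻¹ with ht
  have hLa : Polynomial.eval t (L a) = 0 := by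
    simp [hL, ht, ha0]
  have hvanish : ∀ (N : Fˣ → ℕ), ∀ c ∈ Finset.univ.erase a,
      Polynomial.eval t (C ((N c : F)) * Polynomial.derivative (L c) *
        ∏ b ∈ Finset.univ.erase c, L b) = 0 := by
    intro N c hc
    have hca : c ≠ a := Finset.ne_of_mem_erase hc
    rw [eval_mul, eval_prod]
    rw [Finset.prod_eq_zero (Finset.mem_erase.mpr ⟨hca.symm, Finset.mem_univ a⟩) hLa, mul_zero]
  have hevS : Polynomial.eval t SO = Polynomial.eval t SP := by
    have := congrArg (Polynomial.eval t) hSzero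
    rw [hS, eval_sub, eval_zero, sub_eq_zero] at this
    exact this
  set K : F := ∏ b ∈ Finset.univ.erase a, Polynomial.eval t (L b) with hK
  have hevO : Polynomial.eval t SO = (O a : F) * (a : F) * K := by
    rw [hSO, eval_finset_sum]
    rw [Finset.sum_eq_single_of_mem a (Finset.mem_univ a)
      (fun c _ hca => hvanish O c (Finset.mem_erase.mpr ⟨hca, Finset.mem_univ c⟩))]
    rw [eval_mul, eval_mul, eval_prod, hdL, eval_C, eval_C, hK]
  have hevP : Polynomial.eval t SP = (P a : F) * (a : F) * K := by
    rw [hSP, eval_finset_sum]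
    rw [Finset.sum_eq_single_of_mem a (Finset.mem_univ a)
      (fun c _ hca => hvanish P c (Finset.mem_erase.mpr ⟨hca, Finset.mem_univ c⟩))]
    rw [eval_mul, eval_mul, eval_prod, hdL, eval_C, eval_C, hK]
  have hKne : K ≠ 0 := by
    rw [hK]
    refine Finset.prod_ne_zero_iff.mpr fun b hb => ?_
    have hba : b ≠ a := Finset.ne_of_mem_erase hb
    simp only [hL, hdL, eval_add, eval_one, eval_mul, eval_C, eval_X, ht]
    intro hcon
    apply hba
    refine Units.ext ?_
    have hb2 : (b : F) * (a : F)⁻¹ = 1 := by linear_combination -hcon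
    field_simp at hb2
    exact hb2
  have hfin : (O a : F) = (P a : F) := by
    have h1 := hevS
    rw [hevO, hevP] at h1
    have h2 : (O a : F) * ((a : F) * K) = (P a : F) * ((a : F) * K) := by
      rw [← mul_assoc, ← mul_assoc]; exact h1
    exact mul_right_cancel₀ (mul_ne_zero ha0 hKne) h2
  exact (CharP.natCast_eq_natCast F p).mp hfin
end

section
/- Let q be a power of a prime p and let v, w ∈ 𝔽_q^n satisfy s_j^{(n)}(v) = s_j^{(n)}(w) for j = 1, 2, …, q−1. Then for every a ∈ 𝔽_q^×, the number of indices i with v_i = a is congruent modulo p to the number of indices i with w_i = a. -/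
/-- Geometric sum over `Icc 1 (q - 1)` in a finite field. -/
lemma geom_aux {F : Type*} [Field F] [Fintype F] [DecidableEq F] (t : F) :
    ∑ j ∈ Finset.Icc 1 (Fintype.card F - 1), t ^ j = if t = 1 then -1 else 0 := by
  classical
  have hq : 1 ≤ Fintype.card F := Fintype.card_pos
  have hIcc : Finset.Icc 1 (Fintype.card F - 1) = Finset.Ico 1 (Fintype.card F) := by
    rw [← Finset.Ico_add_one_right_eq_Icc]
    congr 1
    omega
  rw [hIcc, Finset.sum_Ico_eq_sub _ hq]
  simp only [Finset.range_one, Finset.sum_singleton, pow_zero]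
  by_cases ht : t = 1
  · subst ht
    simp [FiniteField.cast_card_eq_zero]
  · rw [geom_sum_eq ht]
    by_cases ht0 : t = 0
    · subst ht0
      rw [if_neg (by simpa using ht)]
      rw [zero_pow (by omega)]
      rw [div_self (by intro hh; rw [sub_eq_zero] at hh; exact ht hh)]
      ring
    · rw [FiniteField.pow_card t, if_neg ht]
      rw [div_self (sub_ne_zero.mpr ht)]
      ring

/-- Evaluating the sum `∑_{j=1}^{q-1} a⁻¹^j * p_j(x)` counts the coordinates equal to
`a`, up to sign, in a finite field. -/
lemma count_aux {F : Type*} [Field F] [Fintype F] [DecidableEq F] {n : ℕ}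
    (x : Fin n → F) (a : F) (ha : a ≠ 0) :
    ∑ j ∈ Finset.Icc 1 (Fintype.card F - 1), a⁻¹ ^ j * ∑ i, x i ^ j =
      -((Finset.univ.filter fun i => x i = a).card : F) := by
  have : ∑ j ∈ Finset.Icc 1 (Fintype.card F - 1), a⁻¹ ^ j * ∑ i, x i ^ j
      = ∑ i, ∑ j ∈ Finset.Icc 1 (Fintype.card F - 1), (x i * a⁻¹) ^ j := by
    rw [Finset.sum_comm]
    apply Finset.sum_congr rfl; intro j _
    rw [Finset.mul_sum]
    apply Finset.sum_congr rfl; intro i _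
    rw [mul_pow]; ring
  rw [this]
  have hterm : ∀ i, ∑ j ∈ Finset.Icc 1 (Fintype.card F - 1), (x i * a⁻¹) ^ j
      = if x i = a then (-1 : F) else 0 := by
    intro i
    rw [geom_aux, if_congr (mul_inv_eq_one₀ ha) rfl rfl]
  simp only [hterm]
  rw [Finset.sum_ite, Finset.sum_const, Finset.sum_const_zero]
  simp [Finset.filter_congr]

open Finset MvPolynomial in
/-- Equality of low elementary symmetric values implies equality of low power sums. -/
lemma psum_aux {F : Type*} [Field F] [Fintype F] {n : ℕ} (v w : Fin n → F)
    (h : ∀ j : ℕ, 1 ≤ j → j ≤ Fintype.card F - 1 →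
      esymmVal n j v = esymmVal n j w) :
    ∀ j : ℕ, 1 ≤ j → j ≤ Fintype.card F - 1 →
      (∑ i, v i ^ j) = ∑ i, w i ^ j := by
  classical
  have keyp : ∀ (x : Fin n → F) (j : ℕ),
      MvPolynomial.eval x (psum (Fin n) F j) = ∑ i, x i ^ j := by
    intro x j; simp [psum]
  have keye : ∀ (x : Fin n → F) (j : ℕ),
      MvPolynomial.eval x (esymm (Fin n) F j) = esymmVal n j x := by
    intro x j; simp [esymm, esymmVal]
  intro j
  induction j using Nat.strong_induction_on with
  | _ j ih =>
    intro hj1 hj2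
    have hv := congrArg (MvPolynomial.eval v)
      (psum_eq_mul_esymm_sub_sum (Fin n) F j hj1)
    have hw := congrArg (MvPolynomial.eval w)
      (psum_eq_mul_esymm_sub_sum (Fin n) F j hj1)
    simp only [map_sub, map_mul, map_pow, map_neg, map_one, map_natCast, map_sum,
      keyp, keye] at hv hw
    rw [hv, hw, h j hj1 hj2]
    congr 1
    apply Finset.sum_congr rfl
    intro c hc
    simp only [Finset.mem_filter, Finset.HasAntidiagonal.mem_antidiagonal, Set.mem_Ioo] at hc
    obtain ⟨hsum, hc1, hc2⟩ := hc
    rw [h c.1 hc1 (by omega), ih c.2 (by omega) (by omega) (by omega)]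

open scoped Classical in
/-- If `v, w ∈ 𝔽_q^n` satisfy `s_j^{(n)}(v) = s_j^{(n)}(w)` for `j = 1, …, q-1`, then
for every `a ∈ 𝔽_q^×` the number of coordinates of `v` equal to `a` is congruent mod
`p` to the number of coordinates of `w` equal to `a`. -/
theorem stmt5 (p : ℕ) (hp : p.Prime) (F : Type*) [Field F] [Fintype F] [CharP F p]
    (n : ℕ) (v w : Fin n → F)
    (h : ∀ j : ℕ, 1 ≤ j → j ≤ Fintype.card F - 1 →
      esymmVal n j v = esymmVal n j w) :
    ∀ a : F, a ≠ 0 →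
      (Finset.univ.filter fun i => v i = a).card ≡
      (Finset.univ.filter fun i => w i = a).card [MOD p] := by
  intro a ha
  rw [← CharP.natCast_eq_natCast F p]
  have hps := psum_aux v w h
  have hv := count_aux v a ha
  have hw := count_aux w a ha
  have : ∑ j ∈ Finset.Icc 1 (Fintype.card F - 1), a⁻¹ ^ j * ∑ i, v i ^ j
      = ∑ j ∈ Finset.Icc 1 (Fintype.card F - 1), a⁻¹ ^ j * ∑ i, w i ^ j := by
    apply Finset.sum_congr rfl
    intro j hj
    simp only [Finset.mem_Icc] at hj
    rw [hps j hj.1 hj.2]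
  rw [hv, hw] at this
  have := neg_injective this
  exact_mod_cast this
end

section
/- Let q be a power of a prime p, let v, w ∈ 𝔽_q^n, and let k ∈ {0, 1, …, ⌊log_p n⌋ − 1}. Suppose that for every a ∈ 𝔽_q^× the number of indices i with v_i = a is congruent modulo p^{k+1} to the number of indices i with w_i = a, and that s_{j·p^{k+1}}^{(n)}(v) = s_{j·p^{k+1}}^{(n)}(w) for j = 1, 2, …, q−1. Then for every a ∈ 𝔽_q^×, the number of indices i with v_i = a is congruent modulo p^{k+2} to the number of indices i with w_i = a. -/
open Polynomial Finset

lemma coeff_prod_one_add {F : Type*} [CommRing F] {ι : Type*} [DecidableEq ι]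
    (s : Finset ι) (f : ι → F) :
    ∀ r : ℕ, (∏ i ∈ s, (1 + C (f i) * X)).coeff r = ∑ t ∈ s.powersetCard r, ∏ i ∈ t, f i := by
  induction s using Finset.induction_on with
  | empty =>
    intro r
    cases r with
    | zero => simp
    | succ r => rw [Finset.powersetCard_eq_empty.2 (by simp)]; simp [Polynomial.coeff_one]
  | insert x s hx ih =>
    intro r
    rw [Finset.prod_insert hx, add_mul, one_mul, coeff_add]
    cases r with
    | zero =>
      rw [mul_assoc, coeff_C_mul]
      simp [ih 0]
    | succ r =>
      rw [mul_assoc, coeff_C_mul, coeff_X_mul, ih, ih,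
        Finset.powersetCard_succ_insert hx, Finset.sum_union, Finset.sum_image]
      · rw [Finset.mul_sum]
        congr 1
        refine Finset.sum_congr rfl fun t ht => ?_
        rw [Finset.prod_insert fun hxt => hx ((Finset.mem_powersetCard.1 ht).1 hxt)]
      · intro t ht t' ht' hh
        have hxt : x ∉ t := fun hc => hx ((Finset.mem_powersetCard.1 ht).1 hc)
        have hxt' : x ∉ t' := fun hc => hx ((Finset.mem_powersetCard.1 ht').1 hc)
        rw [← Finset.erase_insert hxt, ← Finset.erase_insert hxt', hh]
      · rw [Finset.disjoint_left]
        intro t ht htim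
        have hxt : x ∉ t := fun hc => hx ((Finset.mem_powersetCard.1 ht).1 hc)
        obtain ⟨t', _, rfl⟩ := Finset.mem_image.1 htim
        exact hxt (Finset.mem_insert_self _ _)

lemma polyDerivProd {F : Type*} [CommRing F] {ι : Type*} [DecidableEq ι]
    (s : Finset ι) (f : ι → F[X]) :
    derivative (∏ i ∈ s, f i) = ∑ i ∈ s, (∏ j ∈ s.erase i, f j) * derivative (f i) := by
  induction s using Finset.induction_on with
  | empty => simp
  | insert x s hx ih =>
    rw [Finset.prod_insert hx, derivative_mul, ih, Finset.sum_insert hx,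
      Finset.erase_insert hx]
    have hs : ∑ i ∈ s, (∏ j ∈ (insert x s).erase i, f j) * derivative (f i)
        = ∑ i ∈ s, f x * ((∏ j ∈ s.erase i, f j) * derivative (f i)) := by
      refine Finset.sum_congr rfl fun i hi => ?_
      rw [Finset.erase_insert_of_ne (by rintro rfl; exact hx hi),
        Finset.prod_insert (fun hc => hx (Finset.mem_of_mem_erase hc)), mul_assoc]
    rw [hs, ← Finset.mul_sum]
    ring

lemma logderiv_prod {F : Type*} [CommRing F] [DecidableEq F] (S : Finset F) (b : F → F)
    (m : F → ℕ) :
    derivative (∏ a ∈ S, (1 + C (b a) * X) ^ m a) * ∏ a ∈ S, (1 + C (b a) * X) =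
    (∏ a ∈ S, (1 + C (b a) * X) ^ m a) *
      ∑ a ∈ S, C ((m a : F) * b a) * ∏ a' ∈ S.erase a, (1 + C (b a') * X) := by
  rw [polyDerivProd, Finset.sum_mul, Finset.mul_sum]
  refine Finset.sum_congr rfl fun a ha => ?_
  rw [derivative_pow]
  simp only [derivative_add, derivative_one, derivative_mul, derivative_C, derivative_X,
    zero_mul, mul_one, zero_add]
  rcases Nat.eq_zero_or_pos (m a) with h0 | h0
  · simp [h0]
  · have h1 : ∏ a' ∈ S, (1 + C (b a') * X) = (1 + C (b a) * X) * ∏ a' ∈ S.erase a,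
        (1 + C (b a') * X) := (Finset.mul_prod_erase S _ ha).symm
    have h2 : ∏ a' ∈ S, (1 + C (b a') * X) ^ m a' = (1 + C (b a) * X) ^ m a *
        ∏ a' ∈ S.erase a, (1 + C (b a') * X) ^ m a' := (Finset.mul_prod_erase S _ ha).symm
    have h3 : (1 + C (b a) * X) ^ (m a - 1) * (1 + C (b a) * X) = (1 + C (b a) * X) ^ m a := by
      rw [← pow_succ, Nat.sub_add_cancel h0]
    rw [h1, h2, map_mul]
    linear_combination (∏ x ∈ S.erase a, ((1:F[X]) + C (b x) * X) ^ m x) *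
      (∏ x ∈ S.erase a, ((1:F[X]) + C (b x) * X)) * (C ((m a : F)) * C (b a)) * h3

lemma keyIdentity {F : Type*} [CommRing F] [DecidableEq F] (S : Finset F) (b : F → F) (m m' : F → ℕ) :
    (∏ a ∈ S, (1 + C (b a) * X) ^ m a) * (∏ a ∈ S, (1 + C (b a) * X) ^ m' a) *
      ∑ a ∈ S, C (((m a : F) - (m' a : F)) * b a) * ∏ a' ∈ S.erase a, (1 + C (b a') * X)
    = (∏ a ∈ S, (1 + C (b a) * X)) *
      (derivative (∏ a ∈ S, (1 + C (b a) * X) ^ m a) * (∏ a ∈ S, (1 + C (b a) * X) ^ m' a)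
       - derivative (∏ a ∈ S, (1 + C (b a) * X) ^ m' a) * (∏ a ∈ S, (1 + C (b a) * X) ^ m a)) := by
  have h1 := logderiv_prod S b m
  have h2 := logderiv_prod S b m'
  have hE : (∑ a ∈ S, C (((m a : F) - (m' a : F)) * b a) * ∏ a' ∈ S.erase a, (1 + C (b a') * X))
      = (∑ a ∈ S, C ((m a : F) * b a) * ∏ a' ∈ S.erase a, (1 + C (b a') * X))
      - (∑ a ∈ S, C ((m' a : F) * b a) * ∏ a' ∈ S.erase a, (1 + C (b a') * X)) := by
    rw [← Finset.sum_sub_distrib]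
    refine Finset.sum_congr rfl fun a _ => ?_
    rw [sub_mul (m a : F), map_sub, sub_mul]
  rw [hE]
  linear_combination (∏ a ∈ S, ((1:F[X]) + C (b a) * X) ^ m a) * h2 -
    (∏ a ∈ S, ((1:F[X]) + C (b a) * X) ^ m' a) * h1

lemma stepD {F : Type*} [Field F] [DecidableEq F] (S : Finset F) (b : F → F)
    (hb0 : ∀ a ∈ S, b a ≠ 0) (hbi : Set.InjOn b ↑S) (m m' : F → ℕ)
    (hco : ∀ j ≤ S.card, (∏ a ∈ S, (1 + C (b a) * X) ^ m a).coeff j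
        = (∏ a ∈ S, (1 + C (b a) * X) ^ m' a).coeff j) :
    ∀ a ∈ S, (m a : F) = (m' a : F) := by
  intro a ha
  have hcard : 0 < S.card := Finset.card_pos.2 ⟨a, ha⟩
  -- step 1 : coefficients of the "wronskian" vanish below S.card
  have step1 : ∀ j, j + 1 ≤ S.card →
      (derivative (∏ a ∈ S, (1 + C (b a) * X) ^ m a) * (∏ a ∈ S, (1 + C (b a) * X) ^ m' a)
       - derivative (∏ a ∈ S, (1 + C (b a) * X) ^ m' a) *
         (∏ a ∈ S, (1 + C (b a) * X) ^ m a)).coeff j = 0 := by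
    intro j hj
    rw [coeff_sub, coeff_mul, coeff_mul, sub_eq_zero]
    refine Finset.sum_congr rfl fun x hx => ?_
    have hx' := Finset.HasAntidiagonal.mem_antidiagonal.1 hx
    rw [coeff_derivative, coeff_derivative, hco (x.1 + 1) (by omega), hco x.2 (by omega)]
  -- step 3 : coefficients of E vanish below S.card
  have step3 : ∀ j, j + 1 ≤ S.card →
      (∑ a ∈ S, C (((m a : F) - (m' a : F)) * b a) *
        ∏ a' ∈ S.erase a, (1 + C (b a') * X)).coeff j = 0 := by
    intro j
    induction j using Nat.strong_induction_on with
    | _ j ih =>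
      intro hj
      have h0 : ((∏ a ∈ S, (1 + C (b a) * X) ^ m a) * (∏ a ∈ S, (1 + C (b a) * X) ^ m' a) *
          ∑ a ∈ S, C (((m a : F) - (m' a : F)) * b a) *
            ∏ a' ∈ S.erase a, (1 + C (b a') * X)).coeff j = 0 := by
        rw [keyIdentity, coeff_mul]
        refine Finset.sum_eq_zero fun x hx => ?_
        have hx' := Finset.HasAntidiagonal.mem_antidiagonal.1 hx
        rw [step1 x.2 (by omega), mul_zero]
      rw [coeff_mul, Finset.sum_eq_single_of_mem ((0 : ℕ), j)
          (Finset.HasAntidiagonal.mem_antidiagonal.2 (zero_add j))] at h0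
      · rw [coeff_zero_eq_eval_zero] at h0
        simp only [eval_mul, eval_prod, eval_pow, eval_add, eval_one, eval_C, eval_X,
          mul_zero, add_zero, one_pow, Finset.prod_const_one, one_mul] at h0
        exact h0
      · intro x hx hne
        have hx' := Finset.HasAntidiagonal.mem_antidiagonal.1 hx
        have hx2 : x.2 < j := by
          rcases Nat.lt_or_ge x.2 j with hlt | hge
          · exact hlt
          · exact absurd (Prod.ext (by omega) (by omega)) hne
        rw [ih x.2 hx2 (by omega), mul_zero]
  -- step 4 : E = 0
  have hE0 : (∑ a ∈ S, C (((m a : F) - (m' a : F)) * b a) *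
      ∏ a' ∈ S.erase a, (1 + C (b a') * X)) = 0 := by
    have hg1 : ∀ a' : F, ((1 : F[X]) + C (b a') * X).natDegree ≤ 1 := fun a' =>
      (natDegree_add_le _ _).trans
        (max_le (by simp) ((natDegree_C_mul_le _ _).trans (le_of_eq natDegree_X)))
    have hdeg : (∑ a ∈ S, C (((m a : F) - (m' a : F)) * b a) *
        ∏ a' ∈ S.erase a, (1 + C (b a') * X)).natDegree ≤ S.card - 1 := by
      refine natDegree_sum_le_of_forall_le _ _ fun a' ha' => ?_
      refine (natDegree_mul_le).trans ?_
      rw [natDegree_C, zero_add]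
      refine (natDegree_prod_le _ _).trans ?_
      refine le_trans (Finset.sum_le_sum fun x (_ : x ∈ S.erase a') => hg1 x) ?_
      rw [Finset.sum_const, smul_eq_mul, mul_one, Finset.card_erase_of_mem ha']
    ext d
    rw [coeff_zero]
    by_cases hd : d + 1 ≤ S.card
    · exact step3 d hd
    · exact coeff_eq_zero_of_natDegree_lt (lt_of_le_of_lt hdeg (by omega))
  -- step 5 : evaluate at -(b a)⁻¹
  have heval := congrArg (eval (-(b a)⁻¹)) hE0
  rw [eval_finset_sum, eval_zero] at heval
  rw [Finset.sum_eq_single_of_mem a ha] at heval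
  · rw [eval_mul, eval_C, eval_prod] at heval
    have hprod : ∏ a' ∈ S.erase a, eval (-(b a)⁻¹) (1 + C (b a') * X) ≠ 0 := by
      refine Finset.prod_ne_zero_iff.2 fun a' ha' => ?_
      rw [eval_add, eval_one, eval_mul, eval_C, eval_X]
      intro hzero
      rw [mul_neg, add_neg_eq_zero, ← div_eq_mul_inv] at hzero
      exact (Finset.mem_erase.1 ha').1
        (hbi (Finset.mem_of_mem_erase ha') ha ((div_eq_one_iff_eq (hb0 a ha)).1 hzero.symm))
    have h1 : ((m a : F) - (m' a : F)) * b a = 0 :=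
      (mul_eq_zero.1 heval).resolve_right hprod
    have h2 : ((m a : F) - (m' a : F)) = 0 :=
      (mul_eq_zero.1 h1).resolve_right (hb0 a ha)
    exact sub_eq_zero.1 h2
  · intro a' ha' hne
    rw [eval_mul, eval_prod]
    refine mul_eq_zero_of_right _ (Finset.prod_eq_zero
      (Finset.mem_erase.2 ⟨fun hh => hne hh.symm, ha⟩) ?_)
    rw [eval_add, eval_one, eval_mul, eval_C, eval_X, mul_neg,
      mul_inv_cancel₀ (hb0 a ha)]
    exact add_neg_cancel 1

open scoped Classical in
/-- Let `v, w ∈ 𝔽_q^n` and `k ∈ {0, …, ⌊log_p n⌋ - 1}`. If for every `a ∈ 𝔽_q^×`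
the number of coordinates of `v` equal to `a` is congruent mod `p^{k+1}` to the
number of coordinates of `w` equal to `a`, and
`s_{j·p^{k+1}}^{(n)}(v) = s_{j·p^{k+1}}^{(n)}(w)` for `j = 1, …, q-1`, then for every
`a ∈ 𝔽_q^×` the counts are congruent mod `p^{k+2}`. -/
theorem stmt6 (p : ℕ) (hp : p.Prime) (F : Type*) [Field F] [Fintype F] [CharP F p]
    (n : ℕ) (v w : Fin n → F) (k : ℕ) (hk : k + 1 ≤ Nat.log p n)
    (hcount : ∀ a : F, a ≠ 0 →
      (Finset.univ.filter fun i => v i = a).card ≡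
      (Finset.univ.filter fun i => w i = a).card [MOD p ^ (k + 1)])
    (h : ∀ j : ℕ, 1 ≤ j → j ≤ Fintype.card F - 1 →
      esymmVal n (j * p ^ (k + 1)) v = esymmVal n (j * p ^ (k + 1)) w) :
    ∀ a : F, a ≠ 0 →
      (Finset.univ.filter fun i => v i = a).card ≡
      (Finset.univ.filter fun i => w i = a).card [MOD p ^ (k + 2)] := by
  intro a ha
  set P := p ^ (k + 1) with hPdef
  have hP : 0 < P := pow_pos hp.pos _
  set S : Finset F := Finset.univ.erase 0 with hS
  have haS : a ∈ S := Finset.mem_erase.2 ⟨ha, Finset.mem_univ a⟩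
  have hScard : S.card = Fintype.card F - 1 := by
    rw [hS, Finset.card_erase_of_mem (Finset.mem_univ 0), Finset.card_univ]
  -- grouping the product by values
  have hfiber : ∀ u : Fin n → F, ∏ i : Fin n, (1 + C (u i) * X)
      = ∏ a' ∈ S, (1 + C a' * X) ^ (Finset.univ.filter fun i => u i = a').card := by
    intro u
    calc ∏ i : Fin n, (1 + C (u i) * X)
        = ∏ a' : F, ∏ _i ∈ Finset.univ.filter (fun i => u i = a'), (1 + C a' * X) :=
          (Finset.prod_fiberwise_of_maps_to' (g := u) (t := Finset.univ)
            (fun i _ => Finset.mem_univ (u i)) (fun a' => 1 + C a' * X)).symm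
      _ = ∏ a' : F, (1 + C a' * X) ^ (Finset.univ.filter fun i => u i = a').card := by
          refine Finset.prod_congr rfl fun a' _ => ?_
          rw [Finset.prod_const]
      _ = ∏ a' ∈ S, (1 + C a' * X) ^ (Finset.univ.filter fun i => u i = a').card := by
          rw [← Finset.mul_prod_erase Finset.univ _ (Finset.mem_univ (0 : F)), ← hS]
          simp
  -- Frobenius / expand factorization
  have hfact' : Fact p.Prime := ⟨hp⟩
  have hexp : ∀ a' : F, ((1 : F[X]) + C a' * X) ^ P = expand F P (1 + C (a' ^ P) * X) := by
    intro a'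
    rw [hPdef, add_pow_char_pow, one_pow, mul_pow, ← C_pow, map_add, map_one, map_mul,
      expand_C, expand_X]
  have hfact : ∀ u : Fin n → F,
      ∏ i : Fin n, (1 + C (u i) * X) =
      (∏ a' ∈ S, (1 + C a' * X) ^ ((Finset.univ.filter fun i => u i = a').card % P)) *
      expand F P (∏ a' ∈ S, (1 + C (a' ^ P) * X) ^
        ((Finset.univ.filter fun i => u i = a').card / P)) := by
    intro u
    rw [hfiber u, map_prod, ← Finset.prod_mul_distrib]
    refine Finset.prod_congr rfl fun a' _ => ?_
    rw [map_pow, ← hexp, ← pow_mul, ← pow_add, Nat.mod_add_div]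
  have hmodeq : ∀ a' ∈ S, (Finset.univ.filter fun i => v i = a').card % P
      = (Finset.univ.filter fun i => w i = a').card % P :=
    fun a' ha' => hcount a' (Finset.mem_erase.1 ha').1
  have hR : (∏ a' ∈ S, (1 + C a' * X) ^ ((Finset.univ.filter fun i => v i = a').card % P))
      = ∏ a' ∈ S, (1 + C a' * X) ^ ((Finset.univ.filter fun i => w i = a').card % P) :=
    Finset.prod_congr rfl fun a' ha' => by rw [hmodeq a' ha']
  -- coefficients of the quotient polynomials agree up to q - 1
  have hD : ∀ j, j ≤ Fintype.card F - 1 →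
      (∏ a' ∈ S, (1 + C (a' ^ P) * X) ^
        ((Finset.univ.filter fun i => v i = a').card / P)).coeff j
      = (∏ a' ∈ S, (1 + C (a' ^ P) * X) ^
        ((Finset.univ.filter fun i => w i = a').card / P)).coeff j := by
    intro j
    induction j using Nat.strong_induction_on with
    | _ j ih =>
      intro hj
      rcases Nat.eq_zero_or_pos j with rfl | hjpos
      · rw [coeff_zero_eq_eval_zero, coeff_zero_eq_eval_zero]
        simp [eval_prod, eval_pow]
      · have hcoeffP : (∏ i : Fin n, (1 + C (v i) * X)).coeff (j * P)
            = (∏ i : Fin n, (1 + C (w i) * X)).coeff (j * P) := by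
          rw [coeff_prod_one_add, coeff_prod_one_add]
          exact h j hjpos hj
        rw [hfact v, hfact w, hR] at hcoeffP
        have h0 : ((∏ a' ∈ S, (1 + C a' * X) ^
              ((Finset.univ.filter fun i => w i = a').card % P)) *
            expand F P ((∏ a' ∈ S, (1 + C (a' ^ P) * X) ^
                ((Finset.univ.filter fun i => v i = a').card / P)) -
              (∏ a' ∈ S, (1 + C (a' ^ P) * X) ^
                ((Finset.univ.filter fun i => w i = a').card / P)))).coeff (j * P) = 0 := by
          rw [map_sub, mul_sub, coeff_sub, hcoeffP, sub_self]
        rw [coeff_mul, Finset.sum_eq_single_of_mem ((0 : ℕ), j * P)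
            (Finset.HasAntidiagonal.mem_antidiagonal.2 (zero_add _))] at h0
        · rw [coeff_zero_eq_eval_zero] at h0
          simp only [eval_prod, eval_pow, eval_add, eval_one, eval_mul, eval_C, eval_X,
            mul_zero, add_zero, one_pow, Finset.prod_const_one, one_mul] at h0
          rw [Polynomial.coeff_expand hP, if_pos (dvd_mul_left P j),
            Nat.mul_div_cancel _ hP, coeff_sub, sub_eq_zero] at h0
          exact h0
        · intro x hx hne
          have hx' := Finset.HasAntidiagonal.mem_antidiagonal.1 hx
          rw [Polynomial.coeff_expand hP]
          by_cases hdvd : P ∣ x.2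
          · obtain ⟨i, hi⟩ := hdvd
            have hc : j * P = P * j := Nat.mul_comm j P
            have h2 : i ≤ j := Nat.le_of_mul_le_mul_left (by omega) hP
            have hij : i < j := by
              rcases Nat.lt_or_ge i j with hlt | hge
              · exact hlt
              · have hij' : i = j := le_antisymm h2 hge
                subst hij'
                exact absurd (Prod.ext (by omega) (by omega)) hne
            rw [if_pos ⟨i, hi⟩, hi, Nat.mul_div_cancel_left i hP, coeff_sub,
              ih i hij (by omega), sub_self, mul_zero]
          · rw [if_neg hdvd, mul_zero]
  -- injectivity of Frobenius power
  have hinj : Set.InjOn (fun a' : F => a' ^ P) ↑S := by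
    intro x _ y _ hxy
    have hsub : (x - y) ^ P = 0 := by
      rw [hPdef, sub_pow_char_pow]
      simpa [hPdef] using sub_eq_zero.2 hxy
    exact sub_eq_zero.1 (pow_eq_zero_iff hP.ne' |>.1 hsub)
  have hfin := stepD S (fun a' => a' ^ P)
    (fun a' ha' => pow_ne_zero _ (Finset.mem_erase.1 ha').1) hinj
    (fun a' => (Finset.univ.filter fun i => v i = a').card / P)
    (fun a' => (Finset.univ.filter fun i => w i = a').card / P)
    (fun j hj => hD j (by omega)) a haS
  have hmod : (Finset.univ.filter fun i => v i = a).card / P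
      ≡ (Finset.univ.filter fun i => w i = a).card / P [MOD p] :=
    (CharP.natCast_eq_natCast F p).1 hfin
  have hexp2 : p ^ (k + 2) = P * p := by rw [hPdef, ← pow_succ]
  calc (Finset.univ.filter fun i => v i = a).card
      = P * ((Finset.univ.filter fun i => v i = a).card / P)
        + (Finset.univ.filter fun i => v i = a).card % P := (Nat.div_add_mod _ _).symm
    _ = P * ((Finset.univ.filter fun i => v i = a).card / P)
        + (Finset.univ.filter fun i => w i = a).card % P := by rw [hmodeq a haS]
    _ ≡ P * ((Finset.univ.filter fun i => w i = a).card / P)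
        + (Finset.univ.filter fun i => w i = a).card % P [MOD p ^ (k + 2)] := by
          rw [hexp2]
          exact (Nat.ModEq.mul_left' (c := P) hmod).add_right _
    _ = (Finset.univ.filter fun i => w i = a).card := Nat.div_add_mod _ _
end

section
/- Let F be an arbitrary field, let A ⊆ {1,…,n}, and suppose the family {s_i^{(n)} : i ∈ A} separates S_n-orbits in F^n. Then for every m ≤ n, the family {s_j^{(m)} : j ∈ A, j ≤ m} separates S_m-orbits in F^m. -/
/-- The family `{s_i^{(n)} : i ∈ A}` separates the `S_n`-orbits in `F^n`. -/
def Separates (F : Type*) [CommSemiring F] (n : ℕ) (A : Set ℕ) : Prop :=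
  ∀ v w : Fin n → F, ¬ SameOrbit n v w → ∃ i ∈ A, esymmVal n i v ≠ esymmVal n i w

open Finset

/-!
Pad vectors of `F^m` with `n - m` zeros. The multiset of entries only gains zeros, so distinct
`S_m`-orbits stay distinct `S_n`-orbits, and for `i ≥ 1` the zeros do not change `s_i`:
`s_i^{(n)}` of the padded vector is `s_i^{(m)}`, which vanishes for `i > m`. Hence the index
separating the padded vectors separates the original ones and satisfies `i ≤ m`.
-/

lemma esymmVal_eq_esymm_map {F : Type*} [CommSemiring F] (n k : ℕ) (v : Fin n → F) :
    esymmVal n k v = (univ.val.map v).esymm k :=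
  (esymm_map_val v univ k).symm

lemma esymmVal_eq_zero_of_lt {F : Type*} [CommSemiring F] {n k : ℕ} (h : n < k)
    (v : Fin n → F) : esymmVal n k v = 0 := by
  rw [esymmVal, powersetCard_eq_empty.mpr (by simpa using h), sum_empty]

lemma Multiset.esymm_cons_zero {F : Type*} [CommSemiring F] (s : Multiset F) {k : ℕ}
    (hk : 1 ≤ k) : ((0 : F) ::ₘ s).esymm k = s.esymm k := by
  obtain ⟨j, rfl⟩ := Nat.exists_eq_add_of_le' hk
  simp [Multiset.esymm, Multiset.powersetCard_cons]

lemma Multiset.esymm_add_replicate_zero {F : Type*} [CommSemiring F] (s : Multiset F)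
    {k : ℕ} (hk : 1 ≤ k) (z : ℕ) : (s + replicate z 0).esymm k = s.esymm k := by
  induction z with
  | zero => simp
  | succ z ih => rw [replicate_succ, add_cons, esymm_cons_zero _ hk, ih]

lemma map_univ_val_append {α : Type*} {m k : ℕ} (u : Fin m → α) (w : Fin k → α) :
    univ.val.map (Fin.append u w) = univ.val.map u + univ.val.map w := by
  simp [List.ofFn_fin_append]

lemma esymmVal_append_zero {F : Type*} [CommSemiring F] {m k i : ℕ} (hi : 1 ≤ i)
    (v : Fin m → F) : esymmVal (m + k) i (Fin.append v 0) = esymmVal m i v := by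
  rw [esymmVal_eq_esymm_map, esymmVal_eq_esymm_map, map_univ_val_append, Pi.zero_def,
    Multiset.map_const', card_val, card_univ, Fintype.card_fin,
    Multiset.esymm_add_replicate_zero _ hi]

lemma natCard_fiber_eq_count {α F : Type*} [Fintype α] [DecidableEq F] (v : α → F) (b : F) :
    Nat.card {i // v i = b} = (univ.val.map v).count b := by
  rw [Multiset.count_map, Nat.card_eq_fintype_card, Fintype.card_subtype]
  simp only [eq_comm]
  rfl

lemma sameOrbit_iff_map_univ_val_eq {F : Type*} {n : ℕ} {v w : Fin n → F} :
    SameOrbit n v w ↔ univ.val.map v = univ.val.map w := by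
  classical
  constructor
  · rintro ⟨π, hπ⟩
    rw [show w = v ∘ π from funext hπ, ← Multiset.map_map, Multiset.map_univ_val_equiv]
  · intro h
    have hfiber (b : F) : {i // w i = b} ≃ {i // v i = b} :=
      (Finite.card_eq.mp <| by
        rw [natCard_fiber_eq_count, natCard_fiber_eq_count, h]).some
    exact ⟨Equiv.ofFiberEquiv hfiber, fun i => (Equiv.ofFiberEquiv_map hfiber i).symm⟩

lemma sameOrbit_append_right_iff {F : Type*} {m k : ℕ} {v w : Fin m → F} (u : Fin k → F) :
    SameOrbit (m + k) (Fin.append v u) (Fin.append w u) ↔ SameOrbit m v w := by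
  simp only [sameOrbit_iff_map_univ_val_eq, map_univ_val_append, add_left_inj]

/-- If `{s_i^{(n)} : i ∈ A}` (for `A ⊆ {1, …, n}`) separates `S_n`-orbits in `F^n`,
then for every `m ≤ n` the family `{s_j^{(m)} : j ∈ A, j ≤ m}` separates
`S_m`-orbits in `F^m`. -/
theorem stmt8 (F : Type*) [Field F] (n : ℕ) (A : Set ℕ) (hA : A ⊆ Set.Icc 1 n)
    (hsep : Separates F n A) :
    ∀ m : ℕ, m ≤ n → Separates F m {j | j ∈ A ∧ j ≤ m} := by
  intro m hmn v w hvw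
  obtain ⟨k, rfl⟩ := Nat.exists_eq_add_of_le hmn
  obtain ⟨i, hiA, hne⟩ :=
    hsep (Fin.append v 0) (Fin.append w 0) ((sameOrbit_append_right_iff 0).not.mpr hvw)
  have hi : 1 ≤ i := (hA hiA).1
  rw [esymmVal_append_zero hi, esymmVal_append_zero hi] at hne
  refine ⟨i, ⟨hiA, ?_⟩, hne⟩
  by_contra! him
  exact hne (by rw [esymmVal_eq_zero_of_lt him, esymmVal_eq_zero_of_lt him])
end

section
/- Let q be a power of a prime p and k ≤ n positive integers. If the elementary symmetric polynomial s_k^{(n)} is irreplaceable over 𝔽_q, then for every j ∈ ℤ_{≥0} and every m ≥ p^j·n, the elementary symmetric polynomial s_{p^j·k}^{(m)} is irreplaceable over 𝔽_q. -/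
/-- `s_k^{(n)}` is irreplaceable over `F`: every subset `A ⊆ {1, …, n}` such that
`{s_i^{(n)} : i ∈ A}` separates the `S_n`-orbits in `F^n` contains `k`. -/
def Irreplaceable (F : Type*) [CommSemiring F] (n k : ℕ) : Prop :=
  ∀ A : Set ℕ, A ⊆ Set.Icc 1 n → Separates F n A → k ∈ A

open Polynomial

/-- The product of the linear polynomials `X + v i`. -/
noncomputable def prodLin {F : Type*} [Field F] (n : ℕ) (v : Fin n → F) : F[X] :=
  ∏ i, (X + C (v i))

theorem esymmVal_eq_coeff {F : Type*} [Field F] {n i : ℕ} (hi : i ≤ n) (v : Fin n → F) :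
    esymmVal n i v = (prodLin n v).coeff (n - i) := by
  rw [prodLin, Finset.prod_X_add_C_coeff (Finset.univ : Finset (Fin n)) v
    (by simpa using Nat.sub_le n i)]
  simp [esymmVal, Nat.sub_sub_self hi]

theorem sameOrbit_of_multiset_eq {F : Type*} [Fintype F] {n : ℕ} {v w : Fin n → F}
    (h : Multiset.map v Finset.univ.val = Multiset.map w Finset.univ.val) :
    SameOrbit n v w := by
  classical
  letI : LinearOrder F := LinearOrder.lift' (Fintype.equivFin F) (Fintype.equivFin F).injective
  rw [Fin.univ_val_map, Fin.univ_val_map] at h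
  have hperm : (List.ofFn v).Perm (List.ofFn w) := Multiset.coe_eq_coe.mp h
  have h1 : v ∘ Tuple.sort v = w ∘ Tuple.sort w := by
    apply List.ofFn_injective
    exact List.Perm.eq_of_sortedLE
      (Tuple.monotone_sort v).sortedLE_ofFn (Tuple.monotone_sort w).sortedLE_ofFn
      (((Tuple.sort v).ofFn_comp_perm v).trans
        (hperm.trans ((Tuple.sort w).ofFn_comp_perm w).symm))
  refine ⟨(Tuple.sort w).symm.trans (Tuple.sort v), fun i => ?_⟩
  have := congrFun h1 ((Tuple.sort w).symm i)
  simpa using this.symm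

theorem prodLin_eq_of_sameOrbit {F : Type*} [Field F] {n : ℕ} {v w : Fin n → F}
    (h : SameOrbit n v w) : prodLin n v = prodLin n w := by
  obtain ⟨π, hπ⟩ := h
  calc prodLin n v = ∏ i, (X + C (v (π i))) := (Equiv.prod_comp π fun i => X + C (v i)).symm
    _ = prodLin n w := Finset.prod_congr rfl fun i _ => by rw [hπ i]

theorem roots_prodLin {F : Type*} [Field F] {n : ℕ} (v : Fin n → F) :
    (prodLin n v).roots = (Finset.univ.val.map v).map (fun a => -a) := by
  have : prodLin n v
      = (((Finset.univ.val.map v).map (fun a => -a)).map (fun a => X - C a)).prod := by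
    rw [Multiset.map_map, Multiset.map_map, ← Finset.prod_eq_multiset_prod, prodLin]
    exact Finset.prod_congr rfl fun i _ => by simp [sub_neg_eq_add]
  rw [this, roots_multiset_prod_X_sub_C]

theorem multiset_eq_of_prodLin_eq {F : Type*} [Field F] {n : ℕ} {v w : Fin n → F}
    (h : prodLin n v = prodLin n w) :
    Multiset.map v Finset.univ.val = Multiset.map w Finset.univ.val := by
  have hr : (Finset.univ.val.map v).map (fun a : F => -a)
      = (Finset.univ.val.map w).map (fun a : F => -a) := by
    rw [← roots_prodLin v, ← roots_prodLin w, h]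
  have := congrArg (Multiset.map (fun a : F => -a)) hr
  simp only [Multiset.map_map, Function.comp_def, neg_neg] at this
  exact this

theorem coeff_pow_prime_pow {F : Type*} [Field F] (p : ℕ) (hp : p.Prime) [CharP F p]
    (f : F[X]) (j r : ℕ) :
    (f ^ p ^ j).coeff r = if p ^ j ∣ r then (f.coeff (r / p ^ j)) ^ p ^ j else 0 := by
  haveI : ExpChar F p := .prime hp
  rw [← Polynomial.map_iterateFrobenius_expand, Polynomial.coeff_map,
    Polynomial.coeff_expand (pow_pos hp.pos j)]
  split_ifs with hd
  · rw [iterateFrobenius_def]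
  · exact map_zero _

theorem pow_p_pow_inj {R : Type*} [CommRing R] [IsDomain R] (p : ℕ) (hp : p.Prime)
    [CharP R p] (j : ℕ) {a b : R} (hab : a ^ p ^ j = b ^ p ^ j) : a = b := by
  haveI := Fact.mk hp
  apply (frobenius_inj R p).iterate j
  simpa [iterate_frobenius] using hab

/-- If `s_k^{(n)}` is irreplaceable over `𝔽_q` (a finite field of characteristic `p`),
then `s_{p^j·k}^{(m)}` is irreplaceable over `𝔽_q` for all `j ≥ 0` and `m ≥ p^j·n`. -/
theorem stmt11 (p : ℕ) (hp : p.Prime) (F : Type*) [Field F] [Fintype F] [CharP F p]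
    (n k : ℕ) (hk : 1 ≤ k) (hkn : k ≤ n)
    (h : Irreplaceable F n k) :
    ∀ j m : ℕ, p ^ j * n ≤ m → Irreplaceable F m (p ^ j * k) := by
  intro j m hm A hA hsep
  set e := p ^ j with he
  have he1 : 1 ≤ e := Nat.one_le_pow _ _ hp.pos
  set c := m - e * n with hc
  have hmc : m = e * n + c := by omega
  -- the reindexing equivalence
  let E : Fin m ≃ (Fin e × Fin n) ⊕ Fin c :=
    (finCongr hmc).trans (finSumFinEquiv.symm.trans
      (Equiv.sumCongr finProdFinEquiv.symm (Equiv.refl _)))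
  -- the big vector associated to a small vector
  let big : (Fin n → F) → (Fin m → F) := fun v i =>
    Sum.elim (fun x : Fin e × Fin n => v x.2) (fun _ => 0) (E i)
  have hbig : ∀ v : Fin n → F, prodLin m (big v) = (prodLin n v) ^ e * X ^ c := by
    intro v
    calc prodLin m (big v)
        = ∏ s : (Fin e × Fin n) ⊕ Fin c,
            (X + C (Sum.elim (fun x : Fin e × Fin n => v x.2) (fun _ => (0 : F)) s)) :=
          Equiv.prod_comp E fun s =>
            X + C (Sum.elim (fun x : Fin e × Fin n => v x.2) (fun _ => (0 : F)) s)
      _ = (∏ x : Fin e × Fin n, (X + C (v x.2))) * ∏ _x : Fin c, (X + C (0 : F)) :=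
          Fintype.prod_sum_type _
      _ = (prodLin n v) ^ e * X ^ c := by
          rw [Fintype.prod_prod_type]
          simp [prodLin, Finset.prod_const]
  -- key: {i | 1 ≤ i ∧ i ≤ n ∧ e * i ∈ A} separates orbits in F^n
  have key : Separates F n {i | 1 ≤ i ∧ i ≤ n ∧ e * i ∈ A} := by
    intro v w hvw
    have hVW : ¬ SameOrbit m (big v) (big w) := by
      intro hs
      apply hvw
      have hP : prodLin m (big v) = prodLin m (big w) := prodLin_eq_of_sameOrbit hs
      rw [hbig, hbig] at hP
      have hP2 : (prodLin n v) ^ e = (prodLin n w) ^ e :=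
        mul_right_cancel₀ (pow_ne_zero c X_ne_zero) hP
      have hP3 : prodLin n v = prodLin n w := pow_p_pow_inj p hp j hP2
      exact sameOrbit_of_multiset_eq (multiset_eq_of_prodLin_eq hP3)
    obtain ⟨r, hrA, hne⟩ := hsep (big v) (big w) hVW
    obtain ⟨hr1, hrm⟩ := hA hrA
    -- values of the big esymm
    have hval : ∀ u : Fin n → F, esymmVal m r (big u)
        = if c ≤ m - r then ((prodLin n u) ^ e).coeff (m - r - c) else 0 := by
      intro u
      rw [esymmVal_eq_coeff hrm, hbig, Polynomial.coeff_mul_X_pow']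
    rw [hval, hval] at hne
    have hrle : r ≤ e * n := by
      by_contra hgt
      push_neg at hgt
      have : ¬ c ≤ m - r := by omega
      rw [if_neg this, if_neg this] at hne
      exact hne rfl
    have hcle : c ≤ m - r := by omega
    rw [if_pos hcle, if_pos hcle] at hne
    have hmr : m - r - c = e * n - r := by omega
    rw [hmr] at hne
    rw [coeff_pow_prime_pow p hp _ j, coeff_pow_prime_pow p hp _ j] at hne
    have hdvd : e ∣ r := by
      by_contra hnd
      have : ¬ e ∣ e * n - r := by
        intro hd
        have h2 := Nat.dvd_sub (dvd_mul_right e n) hd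
        rw [show e * n - (e * n - r) = r by omega] at h2
        exact hnd h2
      rw [if_neg this, if_neg this] at hne
      exact hne rfl
    obtain ⟨i, rfl⟩ := hdvd
    have hi1 : 1 ≤ i := by
      rcases Nat.eq_zero_or_pos i with h0 | h1
      · subst h0; simp at hr1
      · exact h1
    have hin : i ≤ n := Nat.le_of_mul_le_mul_left hrle (by omega)
    refine ⟨i, ⟨hi1, hin, hrA⟩, ?_⟩
    intro heq
    apply hne
    have hsub : e * n - e * i = e * (n - i) := (Nat.mul_sub ..).symm
    have hd : e ∣ e * n - e * i := ⟨n - i, hsub⟩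
    rw [if_pos hd, if_pos hd]
    have hq : (e * n - e * i) / e = n - i := by
      rw [hsub, Nat.mul_div_cancel_left _ (show 0 < e by omega)]
    rw [hq, ← esymmVal_eq_coeff hin, ← esymmVal_eq_coeff hin, heq]
  have hkA := h _ (fun i hi => ⟨hi.1, hi.2.1⟩) key
  exact hkA.2.2
end

section
/- Let q be a power of a prime p and let k be a positive integer dividing q−1. Then the elementary symmetric polynomial s_k^{(k)} (in k variables) is irreplaceable over 𝔽_q. Concretely, taking v ∈ 𝔽_q^k whose coordinates are the k distinct roots in 𝔽_q of x^k − 1 and w = 0 ∈ 𝔽_q^k, one has s_j^{(k)}(v) = s_j^{(k)}(w) = 0 for j = 1,…,k−1, while s_k^{(k)}(v) = (−1)^{k+1} ≠ 0 = s_k^{(k)}(w). -/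
section Aux
open Polynomial Finset

lemma exists_prim_root_aux (F : Type*) [Field F] [Fintype F]
    (k : ℕ) (hk : 0 < k) (hdvd : k ∣ Fintype.card F - 1) :
    ∃ ζ : F, IsPrimitiveRoot ζ k := by
  classical
  obtain ⟨g, hg⟩ := IsCyclic.exists_ofOrder_eq_natCard (α := Fˣ)
  have hcard : orderOf g = Fintype.card F - 1 := by
    rw [hg, Nat.card_eq_fintype_card, Fintype.card_units]
  have hne : orderOf g ≠ 0 := by
    rw [hcard]
    have : 1 < Fintype.card F := Fintype.one_lt_card
    omega
  have hdvd' : k ∣ orderOf g := hcard ▸ hdvd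
  have hord := orderOf_pow_orderOf_div hne hdvd'
  have hpr : IsPrimitiveRoot (g ^ (orderOf g / k)) (orderOf (g ^ (orderOf g / k))) :=
    IsPrimitiveRoot.orderOf _
  rw [hord] at hpr
  exact ⟨((g ^ (orderOf g / k) : Fˣ) : F), IsPrimitiveRoot.coe_units_iff.mpr hpr⟩

lemma esymm_nthRoots (F : Type*) [Field F] {ζ : F} {k : ℕ} (hk : 0 < k)
    (hζ : IsPrimitiveRoot ζ k) (j : ℕ) (h1 : 1 ≤ j) (h2 : j ≤ k) :
    (Polynomial.nthRootsFinset k (1 : F)).val.esymm j = if j = k then (-1 : F) ^ (k + 1) else 0 := by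
  classical
  have hcard : Multiset.card (Polynomial.nthRootsFinset k (1 : F)).val = k := hζ.card_nthRootsFinset
  have hle : k - j ≤ Multiset.card (Polynomial.nthRootsFinset k (1 : F)).val := by omega
  have hcoeff := Multiset.prod_X_sub_C_coeff (Polynomial.nthRootsFinset k (1 : F)).val hle
  rw [hcard] at hcoeff
  have hsub : k - (k - j) = j := by omega
  rw [hsub] at hcoeff
  have hprod : ((Polynomial.nthRootsFinset k (1 : F)).val.map fun t => X - C t).prod
      = (X : F[X]) ^ k - 1 := by
    rw [Polynomial.X_pow_sub_one_eq_prod hk hζ]; rfl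
  rw [hprod] at hcoeff
  have hcoeffval : ((X : F[X]) ^ k - 1).coeff (k - j) = if j = k then (-1 : F) else 0 := by
    rw [Polynomial.coeff_sub, Polynomial.coeff_X_pow, Polynomial.coeff_one]
    by_cases hjk : j = k
    · subst hjk
      rw [if_pos rfl, Nat.sub_self, if_neg (by omega : ¬ (0 : ℕ) = j),
        if_pos rfl]
      ring
    · rw [if_neg hjk, if_neg (by omega : ¬ (k - j = k)),
        if_neg (by omega : ¬ (k - j = 0))]
      ring
  rw [hcoeffval] at hcoeff
  have hunit : ((-1 : F) ^ j) * ((-1 : F) ^ j) = 1 := by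
    rw [← pow_add, ← two_mul, pow_mul]
    norm_num
  by_cases hjk : j = k
  · subst hjk
    rw [if_pos rfl] at hcoeff ⊢
    have := congrArg (fun x => (-1 : F) ^ j * x) hcoeff
    simp only [← mul_assoc, hunit, one_mul] at this
    rw [← this, pow_succ]
  · rw [if_neg hjk] at hcoeff ⊢
    have := congrArg (fun x => (-1 : F) ^ j * x) hcoeff
    simp only [← mul_assoc, hunit, one_mul, mul_zero] at this
    exact this.symm

end Aux

/-- For a divisor `k` of `q - 1`, the polynomial `s_k^{(k)}` is irreplaceable over
`𝔽_q`. Concretely, taking `v ∈ 𝔽_q^k` whose coordinates are the `k` distinct roots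
of `x^k - 1` in `𝔽_q` and `w = 0`, one has `s_j^{(k)}(v) = s_j^{(k)}(w) = 0` for
`j = 1, …, k-1`, while `s_k^{(k)}(v) = (-1)^{k+1} ≠ 0 = s_k^{(k)}(w)`. -/
theorem stmt13 (p : ℕ) (hp : p.Prime) (F : Type*) [Field F] [Fintype F] [CharP F p]
    (k : ℕ) (hk : 0 < k) (hdvd : k ∣ Fintype.card F - 1) :
    Irreplaceable F k k ∧
    ∃ v : Fin k → F, Function.Injective v ∧ (∀ i, v i ^ k = 1) ∧
      (∀ j : ℕ, 1 ≤ j → j ≤ k - 1 → esymmVal k j v = 0) ∧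
      (∀ j : ℕ, 1 ≤ j → j ≤ k → esymmVal k j (fun _ => (0 : F)) = 0) ∧
      esymmVal k k v = (-1 : F) ^ (k + 1) ∧ ((-1 : F) ^ (k + 1) ≠ 0) := by
  classical
  obtain ⟨ζ, hζ⟩ := exists_prim_root_aux F k hk hdvd
  have hcard : (Polynomial.nthRootsFinset k (1 : F)).card = k := hζ.card_nthRootsFinset
  have e : Fin k ≃ {x // x ∈ Polynomial.nthRootsFinset k (1 : F)} :=
    ((Polynomial.nthRootsFinset k (1 : F)).equivFinOfCardEq hcard).symm
  set v : Fin k → F := fun i => (e i : F) with hv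
  have hinj : Function.Injective v := fun a b hab => e.injective (Subtype.ext hab)
  have hmem : ∀ i, v i ∈ Polynomial.nthRootsFinset k (1 : F) := fun i => (e i).2
  have hpow : ∀ i, v i ^ k = 1 := fun i =>
    (Polynomial.mem_nthRootsFinset hk (1 : F)).mp (hmem i)
  have hmap : (Finset.univ.val.map v) = (Polynomial.nthRootsFinset k (1 : F)).val := by
    have himg : Finset.univ.image v = Polynomial.nthRootsFinset k (1 : F) := by
      apply Finset.eq_of_subset_of_card_le
      · intro x hx
        obtain ⟨i, _, rfl⟩ := Finset.mem_image.mp hx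
        exact hmem i
      · rw [hcard, Finset.card_image_of_injective _ hinj, Finset.card_univ, Fintype.card_fin]
    rw [← himg, Finset.image_val_of_injOn (hinj.injOn)]
  have hesymmVal : ∀ j, esymmVal k j v = (Polynomial.nthRootsFinset k (1 : F)).val.esymm j := by
    intro j
    rw [← hmap, Finset.esymm_map_val]
    rfl
  have hvzero : ∀ j : ℕ, 1 ≤ j → j ≤ k → esymmVal k j (fun _ => (0 : F)) = 0 := by
    intro j h1 h2
    unfold esymmVal
    apply Finset.sum_eq_zero
    intro t ht
    have htc : t.card = j := (Finset.mem_powersetCard.mp ht).2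
    obtain ⟨i, hi⟩ : t.Nonempty := Finset.card_pos.mp (by omega)
    exact Finset.prod_eq_zero hi rfl
  have hmid : ∀ j : ℕ, 1 ≤ j → j ≤ k - 1 → esymmVal k j v = 0 := by
    intro j h1 h2
    rw [hesymmVal, esymm_nthRoots F hk hζ j h1 (by omega), if_neg (by omega)]
  have htop : esymmVal k k v = (-1 : F) ^ (k + 1) := by
    rw [hesymmVal, esymm_nthRoots F hk hζ k hk le_rfl, if_pos rfl]
  have hne : ((-1 : F) ^ (k + 1)) ≠ 0 := by
    apply pow_ne_zero
    simp
  refine ⟨?_, v, hinj, hpow, hmid, hvzero, htop, hne⟩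
  intro A hA hsep
  have hnotorbit : ¬ SameOrbit k v (fun _ => (0 : F)) := by
    rintro ⟨π, hπ⟩
    have h0 : (0 : F) = v (π ⟨0, hk⟩) := hπ ⟨0, hk⟩
    have h1 := hpow (π ⟨0, hk⟩)
    rw [← h0, zero_pow (by omega : k ≠ 0)] at h1
    exact zero_ne_one h1
  obtain ⟨i, hiA, hine⟩ := hsep v (fun _ => (0 : F)) hnotorbit
  obtain ⟨hi1, hi2⟩ := hA hiA
  by_cases hik : i = k
  · exact hik ▸ hiA
  · exact absurd (by rw [hmid i hi1 (by omega), hvzero i hi1 hi2]) hine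
end

section
/- Let k be a positive integer and q a prime power with q ≥ k! − k + 1. Then the elementary symmetric polynomial s_k^{(k)} (in k variables) is irreplaceable over 𝔽_q; equivalently, there exist v, w ∈ 𝔽_q^k lying in different S_k-orbits with s_j^{(k)}(v) = s_j^{(k)}(w) for j = 1,…,k−1 and s_k^{(k)}(v) ≠ s_k^{(k)}(w). (The hypothesis guarantees that the number binom(q−1+k, k) of S_k-orbits in 𝔽_q^k exceeds q^{k−1}, so the pigeonhole principle applies.) -/
section Aux
open Finset Polynomial

lemma esymmVal' {F : Type*} [CommSemiring F] (n j : ℕ) (v : Fin n → F) :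
    (∑ t ∈ Finset.powersetCard j (Finset.univ : Finset (Fin n)), ∏ i ∈ t, v i)
      = (Multiset.map v Finset.univ.val).esymm j := by
  rw [Finset.esymm_map_val]

lemma multiset_ofFn {F : Type*} (n : ℕ) (v : Fin n → F) :
    Multiset.map v Finset.univ.val = ↑(List.ofFn v) := by
  rw [Fin.univ_def]
  simp [List.ofFn_eq_map]

lemma exists_vec {F : Type*} (k : ℕ) (m : Multiset F) (hm : Multiset.card m = k) :
    ∃ v : Fin k → F, Multiset.map v Finset.univ.val = m := by
  have hls : m.toList.length = k := by rw [Multiset.length_toList, hm]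
  refine ⟨fun i => m.toList.get (Fin.cast hls.symm i), ?_⟩
  rw [multiset_ofFn]
  have : List.ofFn (fun i : Fin k => m.toList.get (Fin.cast hls.symm i)) = m.toList := by
    apply List.ext_getElem (by simp [hls])
    intro n h1 h2
    simp [List.getElem_ofFn]
  rw [this, Multiset.coe_toList]

lemma multiset_eq_of_esymm {F : Type*} [Field F] {s t : Multiset F}
    (hc : Multiset.card s = Multiset.card t)
    (h : ∀ j ≤ Multiset.card s, s.esymm j = t.esymm j) : s = t := by
  have hp : (s.map fun r => X + C r).prod = (t.map fun r => X + C r).prod := by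
    rw [Multiset.prod_X_add_C_eq_sum_esymm, Multiset.prod_X_add_C_eq_sum_esymm, ← hc]
    refine Finset.sum_congr rfl fun j hj => ?_
    rw [h j (by simpa using Nat.lt_succ_iff.mp (Finset.mem_range.mp hj))]
  have key : ∀ u : Multiset F,
      (u.map fun r => X + C r).prod = ((u.map (fun a => -a)).map fun r => X - C r).prod := by
    intro u
    rw [Multiset.map_map]
    exact congrArg _ (Multiset.map_congr rfl fun a _ => by simp [sub_neg_eq_add])
  have hr := congrArg Polynomial.roots hp
  rw [key s, key t, Polynomial.roots_multiset_prod_X_sub_C,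
    Polynomial.roots_multiset_prod_X_sub_C] at hr
  exact Multiset.map_injective neg_injective hr

lemma prod_lower (q m : ℕ) : q ^ m ≤ ∏ i ∈ Finset.range m, (q + i) := by
  calc q ^ m = ∏ _i ∈ Finset.range m, q := by rw [Finset.prod_const, Finset.card_range]
  _ ≤ _ := Finset.prod_le_prod' fun i _ => Nat.le_add_right q i

lemma key_ineq (q k : ℕ) (hq : 2 ≤ q) (hk : 0 < k) (h : k.factorial ≤ q + k - 1) :
    k.factorial * q ^ (k - 1) < ∏ i ∈ Finset.range k, (q + i) := by
  match k with
  | 1 => simp [Nat.factorial]; omega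
  | 2 => simp [Nat.factorial, Finset.prod_range_succ, pow_succ]; nlinarith
  | (m+3) =>
    have h1 : q ^ (m+1) ≤ ∏ i ∈ Finset.range (m+1), (q + i) := prod_lower q (m+1)
    have hqpos : 0 < q ^ (m+1) := Nat.pow_pos (by omega)
    have hfle : (m+3).factorial ≤ q + m + 2 := by omega
    calc (m+3).factorial * q ^ (m+3-1)
        = ((m+3).factorial * q) * q ^ (m+1) := by rw [show m+3-1 = m+2 from rfl, pow_succ]; ring
      _ ≤ ((q+m+2) * q) * q ^ (m+1) := by
          exact Nat.mul_le_mul_right _ (Nat.mul_le_mul_right _ hfle)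
      _ < ((q+m+2) * (q+m+1)) * q ^ (m+1) := by
          have h2 : (q+m+2) * q < (q+m+2) * (q+m+1) :=
            mul_lt_mul_of_pos_left (by omega) (by omega)
          exact mul_lt_mul_of_pos_right h2 hqpos
      _ ≤ ((q+m+2) * (q+m+1)) * ∏ i ∈ Finset.range (m+1), (q + i) :=
          Nat.mul_le_mul_left _ h1
      _ = (∏ i ∈ Finset.range (m+1), (q + i)) * (q+(m+1)) * (q+(m+2)) := by ring
      _ = ∏ i ∈ Finset.range (m+3), (q + i) := by
          conv_rhs => rw [Finset.prod_range_succ, Finset.prod_range_succ]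

lemma sameOrbit_multiset {F : Type*} {n : ℕ} {v w : Fin n → F} (h : SameOrbit n v w) :
    Multiset.map w Finset.univ.val = Multiset.map v Finset.univ.val := by
  obtain ⟨π, hπ⟩ := h
  have hperm : Multiset.map (⇑π) Finset.univ.val = Finset.univ.val := by
    calc Multiset.map (⇑π) Finset.univ.val
        = (Finset.univ.map π.toEmbedding).val := rfl
      _ = Finset.univ.val := by rw [Finset.map_univ_equiv]
  calc Multiset.map w Finset.univ.val
      = Multiset.map (v ∘ π) Finset.univ.val :=
        Multiset.map_congr rfl fun i _ => hπ i
    _ = Multiset.map v (Multiset.map (⇑π) Finset.univ.val) := (Multiset.map_map v π _).symm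
    _ = Multiset.map v Finset.univ.val := by rw [hperm]

lemma multiset_esymm_zero {F : Type*} [CommSemiring F] (m : Multiset F) : m.esymm 0 = 1 := by
  simp [Multiset.esymm]

lemma esymmVal_esymm {F : Type*} [CommSemiring F] (n j : ℕ) (v : Fin n → F) :
    esymmVal n j v = (Multiset.map v Finset.univ.val).esymm j :=
  esymmVal' n j v


/-- If `q ≥ k! - k + 1`, then `s_k^{(k)}` is irreplaceable over `𝔽_q`; equivalently,
there exist `v, w ∈ 𝔽_q^k` in different `S_k`-orbits with
`s_j^{(k)}(v) = s_j^{(k)}(w)` for `j = 1, …, k-1` and `s_k^{(k)}(v) ≠ s_k^{(k)}(w)`. -/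
theorem stmt14 (F : Type*) [Field F] [Fintype F] (k : ℕ) (hk : 0 < k)
    (hq : Nat.factorial k - k + 1 ≤ Fintype.card F) :
    Irreplaceable F k k ∧
    ∃ v w : Fin k → F, ¬ SameOrbit k v w ∧
      (∀ j : ℕ, 1 ≤ j → j ≤ k - 1 → esymmVal k j v = esymmVal k j w) ∧
      esymmVal k k v ≠ esymmVal k k w := by
  classical
  set q := Fintype.card F with hqdef
  have hq2 : 2 ≤ q := Fintype.one_lt_card
  have hfacpos : 0 < k.factorial := Nat.factorial_pos k
  have hfac : k.factorial ≤ q + k - 1 := by omega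
  have hlt : q ^ (k - 1) < (q + k - 1).choose k := by
    have hd : (q + k - 1).descFactorial k = ∏ i ∈ Finset.range k, (q + i) := by
      rw [Nat.descFactorial_eq_prod_range, ← Finset.prod_range_reflect]
      refine Finset.prod_congr rfl fun i hi => ?_
      have := Finset.mem_range.mp hi
      omega
    have h1 : k.factorial * q ^ (k - 1) < k.factorial * ((q + k - 1).choose k) := by
      rw [← Nat.descFactorial_eq_factorial_mul_choose, hd]
      exact key_ineq q k hq2 hk hfac
    exact Nat.lt_of_mul_lt_mul_left h1
  have hcard : Fintype.card (Fin (k - 1) → F) < Fintype.card (Sym F k) := by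
    rw [Sym.card_sym_eq_choose, Fintype.card_fun, Fintype.card_fin]
    exact hlt
  obtain ⟨s, t, hst, hΦ⟩ := Fintype.exists_ne_map_eq_of_card_lt
    (fun (s : Sym F k) (j : Fin (k - 1)) => Multiset.esymm (↑s : Multiset F) (j + 1)) hcard
  obtain ⟨v, hv⟩ := exists_vec k (↑s : Multiset F) s.2
  obtain ⟨w, hw⟩ := exists_vec k (↑t : Multiset F) t.2
  have hesymm : ∀ j, 1 ≤ j → j ≤ k - 1 →
      Multiset.esymm (↑s : Multiset F) j = Multiset.esymm (↑t : Multiset F) j := by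
    intro j h1 h2
    have hj : j - 1 < k - 1 := by omega
    have h3 := congrFun hΦ ⟨j - 1, hj⟩
    simpa [Nat.sub_add_cancel h1] using h3
  have hnot : ¬ SameOrbit k v w := by
    intro horb
    apply hst
    have h4 := sameOrbit_multiset horb
    rw [hv, hw] at h4
    exact Subtype.ext h4.symm
  have hkne : esymmVal k k v ≠ esymmVal k k w := by
    intro heq
    apply hst
    apply Subtype.ext
    apply multiset_eq_of_esymm (by rw [s.2, t.2])
    intro j hj
    rcases Nat.eq_zero_or_pos j with h0 | hpos
    · subst h0
      rw [multiset_esymm_zero, multiset_esymm_zero]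
    · have hjk : j ≤ k := by rw [s.2] at hj; exact hj
      rcases eq_or_lt_of_le hjk with rfl | hlt'
      · rw [esymmVal_esymm, esymmVal_esymm, hv, hw] at heq
        exact heq
      · exact hesymm j hpos (by omega)
  have hmid : ∀ j : ℕ, 1 ≤ j → j ≤ k - 1 → esymmVal k j v = esymmVal k j w := by
    intro j h1 h2
    rw [esymmVal_esymm, esymmVal_esymm, hv, hw]
    exact hesymm j h1 h2
  refine ⟨?_, v, w, hnot, hmid, hkne⟩
  intro A hA hsep
  obtain ⟨i, hiA, hne⟩ := hsep v w hnot
  have hi := hA hiA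
  rcases eq_or_lt_of_le hi.2 with h | hlt'
  · rwa [← h]
  · exact absurd (hmid i hi.1 (by omega)) hne

end Aux
end
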